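/- arXiv:2410.01760 — 5 statements merged into one kernel-verified Lean document; each statement's English description precedes it below -/
import Mathlib

section
/- Let Q be any feasible eviction strategy and let H_Q be any eviction graph of a run of Q. Then H_Q is an oriented forest: it contains no directed cycles and every vertex has in-degree at most one. -/
namespace Caching

attribute [local instance low] Classical.propDecidable

/-- A run of a feasible eviction strategy on the request sequence `σ` with cache size `k`
and time horizon `T`.  `C t` is the cache after processing request `t` (with `C 0 = ∅`),
and `p t` is the page evicted at time `t` (meaningful at full-cache misses). -/
structure CacheRun (S : Type) [DecidableEq S] (k T : ℕ) (σ : ℕ → S) where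
  C : ℕ → Finset S
  p : ℕ → S
  init : C 0 = ∅
  card_le : ∀ t, (C t).card ≤ k
  hit : ∀ t, 1 ≤ t → t ≤ T → (σ t ∈ C (t - 1) ∨ (C (t - 1)).card < k) →
      C t = insert (σ t) (C (t - 1))
  evict_mem : ∀ t, 1 ≤ t → t ≤ T → σ t ∉ C (t - 1) → (C (t - 1)).card = k →
      p t ∈ C (t - 1)
  evict : ∀ t, 1 ≤ t → t ≤ T → σ t ∉ C (t - 1) → (C (t - 1)).card = k →
      C t = insert (σ t) ((C (t - 1)).erase (p t))

variable {S : Type} [DecidableEq S]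

/- `nextReq σ T t` is `ν(t)`: the first time `s > t` (with `s ≤ T`) at which the page
`σ t` is requested again, and `T + 1` if there is no such time. -/
open Classical in
noncomputable def nextReq (σ : ℕ → S) (T t : ℕ) : ℕ :=
  if h : ∃ s, t < s ∧ s ≤ T ∧ σ s = σ t then Nat.find h else T + 1

/-- The total prediction loss `η = Σ_{t=1}^T |ν(t) - ω(t)|`. -/
noncomputable def totalLoss (σ : ℕ → S) (T : ℕ) (ω : ℕ → ℕ) : ℕ :=
  ∑ t ∈ Finset.Icc 1 T, Nat.dist (nextReq σ T t) (ω t)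

/-- `I_Q(t)`: indices of the last requests (up to time `t`) of the currently cached pages. -/
noncomputable def lastIdx {k T : ℕ} {σ : ℕ → S} (R : CacheRun S k T σ) (t : ℕ) : Finset ℕ :=
  (Finset.Icc 1 t).filter fun i => σ i ∈ R.C t ∧ ∀ j ∈ Finset.Icc (i + 1) t, σ j ≠ σ i

/-- Time `t` is a full-cache miss (an eviction step). -/
def EvictStep {k T : ℕ} {σ : ℕ → S} (R : CacheRun S k T σ) (t : ℕ) : Prop :=
  1 ≤ t ∧ t ≤ T ∧ σ t ∉ R.C (t - 1) ∧ (R.C (t - 1)).card = k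

/-- At time `t` the run evicts the page whose last-request index is `i`. -/
def EvictsIdx {k T : ℕ} {σ : ℕ → S} (R : CacheRun S k T σ) (t i : ℕ) : Prop :=
  EvictStep R t ∧ i ∈ lastIdx R (t - 1) ∧ R.p t = σ i

/-- `OBJ_Q`: the number of cache misses of the run. -/
noncomputable def misses {k T : ℕ} {σ : ℕ → S} (R : CacheRun S k T σ) : ℕ :=
  ((Finset.Icc 1 T).filter fun t => σ t ∉ R.C (t - 1)).card

/-- Belady's algorithm: on a full-cache miss always evict the cached page with the
largest next-request time. -/
def IsBelady {k T : ℕ} {σ : ℕ → S} (A : CacheRun S k T σ) : Prop :=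
  ∀ t, EvictStep A t → ∀ i ∈ lastIdx A (t - 1), A.p t = σ i →
    ∀ j ∈ lastIdx A (t - 1), nextReq σ T j ≤ nextReq σ T i

/-- BlindOracle: on a full-cache miss always evict the cached page with the largest
predicted next-request time. -/
def IsBlindOracle {k T : ℕ} {σ : ℕ → S} (B : CacheRun S k T σ) (ω : ℕ → ℕ) : Prop :=
  ∀ t, EvictStep B t → ∀ i ∈ lastIdx B (t - 1), B.p t = σ i →
    ∀ j ∈ lastIdx B (t - 1), ω j ≤ ω i

/-- An eviction graph of a run: a directed graph on `{1,…,T}` whose every edge `(i, j)`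
corresponds to a distinct time (`time e`) at which the run made a mistake by evicting
page `σ j` while `i` was a strictly better eviction candidate in the cache. -/
structure EvictionGraph {k T : ℕ} {σ : ℕ → S} (R : CacheRun S k T σ) where
  E : Finset (ℕ × ℕ)
  time : ℕ × ℕ → ℕ
  time_inj : ∀ e ∈ E, ∀ e' ∈ E, time e = time e' → e = e'
  mistake : ∀ e ∈ E, EvictsIdx R (time e) e.2 ∧ e.1 ∈ lastIdx R (time e - 1) ∧
      nextReq σ T e.2 < nextReq σ T e.1

/-- The eviction at time `t` triggers the eviction at time `t'`: the page evicted
at `t` is next requested at `t' = ν(i)`, which is again an eviction step. -/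
def Triggers {k T : ℕ} {σ : ℕ → S} (R : CacheRun S k T σ) (t t' : ℕ) : Prop :=
  ∃ i, EvictsIdx R t i ∧ t' = nextReq σ T i ∧ ∃ j, EvictsIdx R t' j

/-- The eviction of the page with last-request index `i` triggers the eviction of the
page with last-request index `j` (at time `ν(i)`). -/
def TriggersIdx {k T : ℕ} {σ : ℕ → S} (R : CacheRun S k T σ) (i j : ℕ) : Prop :=
  (∃ t, EvictsIdx R t i) ∧ EvictsIdx R (nextReq σ T i) j

/-- The page requested at time `t` was never requested before. -/
def NewPage (σ : ℕ → S) (t : ℕ) : Prop := ∀ s, 1 ≤ s → s < t → σ s ≠ σ t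

/-- At time `t` the evicted page has the largest prediction among cached pages. -/
def BlindChoiceAt {k T : ℕ} {σ : ℕ → S} (R : CacheRun S k T σ) (ω : ℕ → ℕ) (t : ℕ) : Prop :=
  ∀ i ∈ lastIdx R (t - 1), R.p t = σ i → ∀ j ∈ lastIdx R (t - 1), ω j ≤ ω i

/-- Corrector's choice at time `t`: if some cached page has a provably wrong prediction
(`ω i < t`), evict such a page with minimal prediction; otherwise act as BlindOracle. -/
def CorrectorChoiceAt {k T : ℕ} {σ : ℕ → S} (R : CacheRun S k T σ) (ω : ℕ → ℕ) (t : ℕ) :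
    Prop :=
  ((∃ i ∈ lastIdx R (t - 1), ω i < t) →
    ∀ i ∈ lastIdx R (t - 1), R.p t = σ i →
      ω i < t ∧ ∀ j ∈ lastIdx R (t - 1), ω j < t → ω i ≤ ω j) ∧
  ((¬ ∃ i ∈ lastIdx R (t - 1), ω i < t) → BlindChoiceAt R ω t)

/-- The page requested at time `t` was last evicted (before `t`) at a step labeled with
strategy `s₀` (0 = BlindOracle, 1 = RandomAlg, 2 = Corrector). -/
def LastEvictedWith {k T : ℕ} {σ : ℕ → S} (R : CacheRun S k T σ) (strat : ℕ → Fin 3)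
    (t : ℕ) (s₀ : Fin 3) : Prop :=
  ∃ t₀, t₀ < t ∧ EvictStep R t₀ ∧ R.p t₀ = σ t ∧ strat t₀ = s₀ ∧
    ∀ t₁, t₀ < t₁ → t₁ < t → ¬(EvictStep R t₁ ∧ R.p t₁ = σ t)

/-- A run of the AlternatingOracle strategy (for a fixed realization of its random
choices), together with the labeling `strat` of which of the three strategies was used
at each eviction step: on a miss for a never-requested page use BlindOracle; if the
requested page was last evicted by BlindOracle use RandomAlg (an arbitrary cached page);
if by RandomAlg use Corrector; if by Corrector use BlindOracle. -/
def IsAlternatingOracle {k T : ℕ} {σ : ℕ → S} (R : CacheRun S k T σ) (ω : ℕ → ℕ)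
    (strat : ℕ → Fin 3) : Prop :=
  ∀ t, EvictStep R t →
    (NewPage σ t → strat t = 0 ∧ BlindChoiceAt R ω t) ∧
    (LastEvictedWith R strat t 0 → strat t = 1) ∧
    (LastEvictedWith R strat t 1 → strat t = 2 ∧ CorrectorChoiceAt R ω t) ∧
    (LastEvictedWith R strat t 2 → strat t = 0 ∧ BlindChoiceAt R ω t)

/-- AlternatingOracle driven by a seed `u` of uniform random values: at each eviction
step performed by RandomAlg at time `t`, the evicted page is the one whose last-request
index has rank `u t` among the `k` cached indices, so that for a uniformly random seed
the evicted page is uniform over the cache. -/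
def IsAlternatingOracleSeeded {k T : ℕ} {σ : ℕ → S} (R : CacheRun S k T σ) (ω : ℕ → ℕ)
    (strat : ℕ → Fin 3) (u : Fin (T + 1) → Fin k) : Prop :=
  IsAlternatingOracle R ω strat ∧
  ∀ t (h : EvictStep R t), strat t = 1 →
    ∀ i ∈ lastIdx R (t - 1), R.p t = σ i →
      ((lastIdx R (t - 1)).filter fun j => j < i).card =
        ((u ⟨t, Nat.lt_succ_of_le h.2.1⟩ : Fin k) : ℕ)

/-- The family of runs is adapted to the seeds: the behavior up to time `t` depends only
on the seed values with index at most `t` (the strategy is online). -/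
def Adapted {k T : ℕ} {σ : ℕ → S} (R : (Fin (T + 1) → Fin k) → CacheRun S k T σ)
    (strat : (Fin (T + 1) → Fin k) → ℕ → Fin 3) : Prop :=
  ∀ u u' t, (∀ s : Fin (T + 1), (s : ℕ) ≤ t → u s = u' s) →
    (R u).C t = (R u').C t ∧ (R u).p t = (R u').p t ∧ strat u t = strat u' t

/-- The probability of the outcome `x` for `T` i.i.d. Bernoulli(γ) random bits. -/
noncomputable def bernWeight (γ : ℝ) {T : ℕ} (x : Fin T → Bool) : ℝ :=
  ∏ i, if x i then γ else 1 - γ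

/-- `S(x, m)`: the number of ones among the first `m` coordinates of `x`. -/
noncomputable def scount {T : ℕ} (x : Fin T → Bool) (m : ℕ) : ℕ :=
  (Finset.univ.filter fun i : Fin T => (i : ℕ) < m ∧ x i).card

/-! Along every edge `(i, j)` of an eviction graph `ν` strictly decreases, so there is no
directed cycle. A last-request index `j` is evicted at most once: after the eviction the
page `σ j` re-enters the cache only by being requested again, which makes `j` stale. Two
edges into `j` therefore share their time, hence coincide. -/

namespace CacheRun

variable {k T : ℕ} {σ : ℕ → S} (R : CacheRun S k T σ)

theorem mem_of_mem_succ {s : ℕ} (hs : s + 1 ≤ T) {x : S} (hx : x ∈ R.C (s + 1))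
    (hne : x ≠ σ (s + 1)) : x ∈ R.C s := by
  have hstep := R.hit (s + 1) (by omega) hs
  have hevict := R.evict (s + 1) (by omega) hs
  simp only [Nat.add_sub_cancel] at hstep hevict
  by_cases hc : σ (s + 1) ∈ R.C s ∨ (R.C s).card < k
  · rw [hstep hc, Finset.mem_insert] at hx
    exact hx.resolve_left hne
  · push Not at hc
    rw [hevict hc.1 (le_antisymm (R.card_le s) hc.2), Finset.mem_insert] at hx
    exact Finset.mem_of_mem_erase (hx.resolve_left hne)

theorem mem_of_mem_of_not_requested {a b : ℕ} (hab : a ≤ b) (hb : b ≤ T) {x : S}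
    (hno : ∀ s, a < s → s ≤ b → σ s ≠ x) (hx : x ∈ R.C b) : x ∈ R.C a := by
  induction b, hab using Nat.le_induction with
  | base => exact hx
  | succ b hab ih =>
    exact ih (by omega) (fun s has hsb => hno s has (by omega))
      (R.mem_of_mem_succ hb hx (hno (b + 1) (by omega) le_rfl).symm)

theorem evicted_not_mem {t : ℕ} (h : EvictStep R t) : R.p t ∉ R.C t := by
  obtain ⟨ht1, htT, hmiss, hcard⟩ := h
  have hne : R.p t ≠ σ t := fun heq => hmiss (heq ▸ R.evict_mem t ht1 htT hmiss hcard)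
  simp [R.evict t ht1 htT hmiss hcard, hne]

end CacheRun

section

variable {k T : ℕ} {σ : ℕ → S} {R : CacheRun S k T σ}

theorem EvictsIdx.time_le {t t' j : ℕ} (h : EvictsIdx R t j) (h' : EvictsIdx R t' j) :
    t' ≤ t := by
  by_contra! htt'
  obtain ⟨hstep, hj, hp⟩ := h
  obtain ⟨⟨_, ht'T, _, _⟩, hj', _⟩ := h'
  simp only [lastIdx, Finset.mem_filter, Finset.mem_Icc] at hj hj'
  obtain ⟨_, hmem, hstale⟩ := hj'
  exact R.evicted_not_mem hstep (hp ▸ R.mem_of_mem_of_not_requested (by omega) (by omega)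
    (fun s hts hst' => hstale s ⟨by omega, hst'⟩) hmem)

theorem EvictsIdx.time_eq {t t' j : ℕ} (h : EvictsIdx R t j) (h' : EvictsIdx R t' j) :
    t = t' :=
  le_antisymm (h'.time_le h) (h.time_le h')

end

theorem stmt1_general {S : Type} [DecidableEq S] (k T : ℕ) (σ : ℕ → S)
    (R : CacheRun S k T σ) (H : EvictionGraph R) :
    (∀ (n : ℕ) (f : ℕ → ℕ), 0 < n → (∀ i < n, (f i, f (i + 1)) ∈ H.E) → f n ≠ f 0) ∧
    (∀ e ∈ H.E, ∀ e' ∈ H.E, e.2 = e'.2 → e = e') := by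
  constructor
  · intro n f hn hpath hcycle
    have hanti : StrictAntiOn (fun i => nextReq σ T (f i)) (Set.Iic n) :=
      strictAntiOn_Iic_of_succ_lt fun m hm => by
        simpa only [Order.succ_eq_add_one] using (H.mistake _ (hpath m hm)).2.2
    exact (hanti (Set.mem_Iic.2 n.zero_le) (Set.mem_Iic.2 le_rfl) hn).ne
      (congrArg (nextReq σ T) hcycle)
  · intro e he e' he' htarget
    exact H.time_inj e he e' he' ((H.mistake e he).1.time_eq (htarget ▸ (H.mistake e' he').1))

/-- Any eviction graph of a run of a feasible eviction strategy is an
oriented forest: it has no directed cycles and every vertex has in-degree at most one. -/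
theorem stmt1 {S : Type} [DecidableEq S] (k T : ℕ) (hk : 1 ≤ k) (σ : ℕ → S)
    (R : CacheRun S k T σ) (H : EvictionGraph R) :
    (∀ (n : ℕ) (f : ℕ → ℕ), 0 < n → (∀ i < n, (f i, f (i + 1)) ∈ H.E) → f n ≠ f 0) ∧
    (∀ e ∈ H.E, ∀ e' ∈ H.E, e.2 = e'.2 → e = e') :=
  stmt1_general k T σ R H

end Caching
end

section
/- For any feasible eviction strategy Q (and any run of Q), there exists an eviction graph H_Q of that run such that OBJ_Q ≤ OPT + |E|, where E is the set of edges of H_Q. -/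
/-!
Fix a Belady run `A`. If a run `R` agrees with `A` before time `t`, let the hybrid run `B` copy `R`
before `t`, evict Belady's page at `t`, and afterwards shadow `R`, so that its cache either equals
that of `R` or differs from it by one swapped page. A case analysis of a single request shows that,
along this coupling, misses − mistakes of `B` never fall below those of `R`: the one unit of credit
needed while `B` holds the page requested sooner is paid by a mistake of `R` at the step that
creates it. Since `B` agrees with `A` one step longer than `R`, downward induction on the common
prefix gives misses R − mistakes R ≤ misses A = OPT. Each mistake of `R` yields an edge `(i, j)`,
`j` the index of the evicted page, and distinct mistakes evict distinct indices `j`, so the mistakes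
form an eviction graph.
-/

namespace Caching

attribute [local instance low] Classical.propDecidable

variable {S : Type} [DecidableEq S]

open Finset

-- Unlike `nextReq`, this is a function of the page; `nextReq σ T i = nextUse σ T i (σ i)` holds
-- by definition.
open Classical in
noncomputable def nextUse (σ : ℕ → S) (T s : ℕ) (x : S) : ℕ :=
  if h : ∃ u, s < u ∧ u ≤ T ∧ σ u = x then Nat.find h else T + 1

section NextUse

variable {σ : ℕ → S} {T s i : ℕ} {x y : S}

lemma nextUse_succ_of_ne (h : σ (s + 1) ≠ x) : nextUse σ T (s + 1) x = nextUse σ T s x := by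
  have hiff : ∀ {u}, (s + 1 < u ∧ u ≤ T ∧ σ u = x) ↔ (s < u ∧ u ≤ T ∧ σ u = x) := by
    intro u
    refine ⟨fun ⟨h1, h2, h3⟩ => ⟨by omega, h2, h3⟩, fun ⟨h1, h2, h3⟩ => ⟨?_, h2, h3⟩⟩
    by_contra hu
    exact h (by rwa [show u = s + 1 by omega] at h3)
  unfold nextUse
  by_cases hex : ∃ u, s < u ∧ u ≤ T ∧ σ u = x
  · rw [dif_pos (hex.imp fun _ => hiff.2), dif_pos hex]
    exact Nat.find_congr' hiff
  · rw [dif_neg fun h' => hex (h'.imp fun _ => hiff.1), dif_neg hex]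

lemma nextUse_self (hs : s + 1 ≤ T) : nextUse σ T s (σ (s + 1)) = s + 1 := by
  have hex : ∃ u, s < u ∧ u ≤ T ∧ σ u = σ (s + 1) := ⟨s + 1, by omega, hs, rfl⟩
  rw [nextUse, dif_pos hex, Nat.find_eq_iff]
  exact ⟨⟨by omega, hs, rfl⟩, fun n hn ⟨h1, _⟩ => by omega⟩

lemma nextUse_self_lt (hs : s + 1 ≤ T) (hy : y ≠ σ (s + 1)) :
    nextUse σ T s (σ (s + 1)) < nextUse σ T s y := by
  rw [nextUse_self hs, nextUse]
  split_ifs with hex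
  · obtain ⟨h1, -, h3⟩ := Nat.find_spec hex
    have : Nat.find hex ≠ s + 1 := fun he => hy (by rw [← h3, he])
    omega
  · omega

lemma nextUse_eq_of_forall_ne (hi : i ≤ s) (h : ∀ j, i < j → j ≤ s → σ j ≠ x) :
    nextUse σ T s x = nextUse σ T i x := by
  induction s, hi using Nat.le_induction with
  | base => rfl
  | succ s hs ih =>
    rw [nextUse_succ_of_ne (h (s + 1) (by omega) le_rfl), ih fun j hj1 hj2 => h j hj1 (by omega)]

end NextUse

def CacheStep (k : ℕ) (x : S) (C : Finset S) (p : S) (C' : Finset S) : Prop :=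
  ((x ∈ C ∨ C.card < k) ∧ C' = insert x C) ∨
    (x ∉ C ∧ C.card = k ∧ p ∈ C ∧ C' = insert x (C.erase p))

def IsMistake (ν : S → ℕ) (k : ℕ) (x : S) (C : Finset S) (p : S) : Prop :=
  x ∉ C ∧ C.card = k ∧ ∃ y ∈ C, ν p < ν y

section CacheStep

variable {k : ℕ} {x p q : S} {C C' C'' : Finset S}

lemma CacheStep.subset (h : CacheStep k x C p C') : C' ⊆ insert x C := by
  rcases h with ⟨-, rfl⟩ | ⟨-, -, -, rfl⟩
  · exact subset_rfl
  · exact insert_subset_insert _ (erase_subset _ _)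

lemma CacheStep.eq_of_mem (h : CacheStep k x C p C') (hx : x ∈ C) : C' = C := by
  rcases h with ⟨-, rfl⟩ | ⟨hx', -⟩
  · exact insert_eq_of_mem hx
  · exact absurd hx hx'

lemma CacheStep.evict (h : CacheStep k x C p C') (hx : x ∉ C) (hc : C.card = k) :
    p ∈ C ∧ C' = insert x (C.erase p) := by
  rcases h with ⟨hh | hh, -⟩ | ⟨-, -, h⟩
  · exact absurd hh hx
  · exact absurd hc hh.ne
  · exact h

lemma CacheStep.eq (h : CacheStep k x C p C') (h' : CacheStep k x C q C'')
    (hpq : x ∉ C → C.card = k → p = q) : C' = C'' := by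
  by_cases hev : x ∉ C ∧ C.card = k
  · rw [(h.evict hev.1 hev.2).2, (h'.evict hev.1 hev.2).2, hpq hev.1 hev.2]
  · rcases h with ⟨-, rfl⟩ | ⟨hx, hc, -⟩
    · rcases h' with ⟨-, rfl⟩ | ⟨hx, hc, -⟩
      · rfl
      · exact absurd ⟨hx, hc⟩ hev
    · exact absurd ⟨hx, hc⟩ hev

lemma card_insert_erase (hx : x ∉ C) (hp : p ∈ C) : (insert x (C.erase p)).card = C.card := by
  rw [card_insert_of_notMem fun h => hx (mem_of_mem_erase h), card_erase_of_mem hp]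
  have := card_pos.2 ⟨p, hp⟩
  omega

end CacheStep

structure IsSwap (k : ℕ) (CR CB : Finset S) (a b : S) : Prop where
  new_notMem : a ∉ CR
  old_mem : b ∈ CR
  card_eq : CR.card = k
  eq : CB = insert a (CR.erase b)

-- The state of the coupling of a run `R` (cache `CR`) with the hybrid run `B` (cache `CB`). The
-- credit `c` is how far misses − mistakes of `B` are ahead of those of `R`; one unit is owed while
-- `B` holds a page `a` that is requested before the page `b` it lacks.
def Coupled (ν : S → ℕ) (k : ℕ) (CR CB : Finset S) (c : ℕ) : Prop :=
  CB = CR ∨ ∃ a b, IsSwap k CR CB a b ∧ (ν a < ν b → 1 ≤ c)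

def BalancedStep (ν ν' : S → ℕ) (k : ℕ) (x : S) (CR CB : Finset S) (pR pB : S)
    (CR' CB' : Finset S) (c : ℕ) : Prop :=
  ∃ c', Coupled ν' k CR' CB' c' ∧
    (if x ∉ CR then 1 else 0) + (if IsMistake ν k x CB pB then 1 else 0) + c' ≤
      (if x ∉ CB then 1 else 0) + (if IsMistake ν k x CR pR then 1 else 0) + c

-- While shadowing `R`, `B` evicts its extra page `a` when `R` hits, when `R` evicts `b`, or when
-- `ν b ≤ ν pR < ν a`; otherwise it evicts `R`'s victim `pR`.
def hybridCandidates (ν : S → ℕ) (x : S) (CR CB : Finset S) (pR : S) : Finset S :=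
  if x ∈ CR ∨ pR ∉ CB ∨ ∃ a ∈ CB \ CR, ∃ b ∈ CR \ CB, ν b ≤ ν pR ∧ ν pR < ν a then CB \ CR
  else {pR}

def ChosenFrom (V C : Finset S) (p : S) : Prop := (V ∩ C).Nonempty → p ∈ V

lemma ChosenFrom.eq_of_singleton {C : Finset S} {p q : S} (h : ChosenFrom {q} C p) (hq : q ∈ C) :
    p = q :=
  mem_singleton.1 (h ⟨q, mem_inter.2 ⟨mem_singleton_self q, hq⟩⟩)

section Coupling

variable {ν ν' : S → ℕ} {k c : ℕ} {x y a b p pR pB : S} {C CR CB CR' CB' : Finset S}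

lemma ite_le_ite_of_imp {P Q : Prop} [Decidable P] [Decidable Q] (h : P → Q) :
    (if P then 1 else 0 : ℕ) ≤ if Q then 1 else 0 := by
  split_ifs with hP hQ <;> first | omega | exact absurd (h hP) hQ

lemma hybridCandidates_self (hx : x ∉ C) (hp : p ∈ C) : hybridCandidates ν x C C p = {p} := by
  simp [hybridCandidates, hx, hp]

lemma isSwap_insert_erase (hx : x ∉ C) (hc : C.card = k) (hp : p ∈ C) (hb : b ∈ C) (hpb : p ≠ b) :
    IsSwap k (insert x (C.erase p)) (insert x (C.erase b)) p b where
  new_notMem := by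
    rw [mem_insert, mem_erase]
    rintro (h | ⟨h, -⟩)
    · exact hx (h ▸ hp)
    · exact h rfl
  old_mem := mem_insert_of_mem (mem_erase.2 ⟨hpb.symm, hb⟩)
  card_eq := (card_insert_erase hx hp).trans hc
  eq := by
    ext y
    simp only [mem_insert, mem_erase]
    grind

lemma balancedStep_self (hR : CacheStep k x C pR CR') (hB : CacheStep k x C pB CB')
    (hp : x ∉ C → C.card = k → pB = pR) : BalancedStep ν ν' k x C C pR pB CR' CB' c := by
  have hm : IsMistake ν k x C pB ↔ IsMistake ν k x C pR := by
    constructor <;> rintro ⟨hx, hc, hy⟩ <;> refine ⟨hx, hc, ?_⟩ <;> simpa [hp hx hc] using hy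
  refine ⟨0, Or.inl (hB.eq hR hp), ?_⟩
  rw [hm]
  omega

lemma balancedStep_of_maximal (hν' : ∀ y ≠ x, ν' y = ν y) (hR : CacheStep k x C pR CR')
    (hB : CacheStep k x C pB CB') (hmax : x ∉ C → C.card = k → ∀ y ∈ C, ν y ≤ ν pB) :
    BalancedStep ν ν' k x C C pR pB CR' CB' c := by
  by_cases hev : x ∉ C ∧ C.card = k
  swap
  · exact balancedStep_self hR hB fun hx hc => absurd ⟨hx, hc⟩ hev
  obtain ⟨hx, hc⟩ := hev
  obtain ⟨hpR, rfl⟩ := hR.evict hx hc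
  obtain ⟨hpB, rfl⟩ := hB.evict hx hc
  by_cases hpq : pR = pB
  · exact balancedStep_self hR hB fun _ _ => hpq.symm
  have hBm : ¬IsMistake ν k x C pB := fun ⟨_, _, y, hy, hlt⟩ => (hmax hx hc y hy).not_gt hlt
  refine ⟨if IsMistake ν k x C pR then 1 else 0,
    Or.inr ⟨pR, pB, isSwap_insert_erase hx hc hpR hpB hpq, fun hlt => ?_⟩, ?_⟩
  · rw [hν' pR fun h => hx (h ▸ hpR), hν' pB fun h => hx (h ▸ hpB)] at hlt
    rw [if_pos ⟨hx, hc, pB, hpB, hlt⟩]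
  · rw [if_pos hx, if_neg hBm]
    omega

namespace IsSwap

lemma ne (h : IsSwap k CR CB a b) : a ≠ b := fun hab => h.new_notMem (hab ▸ h.old_mem)

lemma mem_iff (h : IsSwap k CR CB a b) : y ∈ CB ↔ y = a ∨ y ≠ b ∧ y ∈ CR := by
  rw [h.eq, mem_insert, mem_erase]

lemma new_mem (h : IsSwap k CR CB a b) : a ∈ CB := h.mem_iff.2 (Or.inl rfl)

lemma old_notMem (h : IsSwap k CR CB a b) : b ∉ CB := by
  rw [h.mem_iff]
  rintro (hba | ⟨hbb, -⟩)
  · exact h.ne hba.symm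
  · exact hbb rfl

lemma card_eq' (h : IsSwap k CR CB a b) : CB.card = k := by
  rw [h.eq, card_insert_erase h.new_notMem h.old_mem, h.card_eq]

lemma erase_new (h : IsSwap k CR CB a b) : CB.erase a = CR.erase b := by
  rw [h.eq, erase_insert fun ha => h.new_notMem (mem_of_mem_erase ha)]

lemma hybridCandidates_eq (h : IsSwap k CR CB a b) :
    hybridCandidates ν x CR CB pR =
      if x ∈ CR ∨ pR ∉ CB ∨ ν b ≤ ν pR ∧ ν pR < ν a then {a} else {pR} := by
  have hl : CB \ CR = {a} := by
    ext y
    rw [mem_sdiff, h.mem_iff, mem_singleton]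
    constructor
    · rintro ⟨hy | ⟨-, hy⟩, hy'⟩
      · exact hy
      · exact absurd hy hy'
    · rintro rfl
      exact ⟨Or.inl rfl, h.new_notMem⟩
  have hr : CR \ CB = {b} := by
    ext y
    rw [mem_sdiff, h.mem_iff, mem_singleton]
    constructor
    · rintro ⟨hy, hy'⟩
      by_contra hyb
      exact hy' (Or.inr ⟨hyb, hy⟩)
    · rintro rfl
      exact ⟨h.old_mem, h.old_notMem ∘ h.mem_iff.2⟩
  simp only [hybridCandidates, hl, hr, mem_singleton, exists_eq_left]

lemma victim_eq_new (h : IsSwap k CR CB a b)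
    (hpB : ChosenFrom (hybridCandidates ν x CR CB pR) CB pB)
    (hcase : x ∈ CR ∨ pR ∉ CB ∨ ν b ≤ ν pR ∧ ν pR < ν a) : pB = a := by
  rw [h.hybridCandidates_eq, if_pos hcase] at hpB
  exact hpB.eq_of_singleton h.new_mem

lemma victim_eq_follow (h : IsSwap k CR CB a b)
    (hpB : ChosenFrom (hybridCandidates ν x CR CB pR) CB pB)
    (hx : x ∉ CR) (hp : pR ∈ CB) (hcase : ¬(ν b ≤ ν pR ∧ ν pR < ν a)) : pB = pR := by
  rw [h.hybridCandidates_eq, if_neg (by tauto)] at hpB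
  exact hpB.eq_of_singleton hp

lemma exists_lt_of_isMistake (h : IsSwap k CR CB a b) (hm : IsMistake ν k x CB p) :
    ν p < ν a ∨ ∃ w ∈ CR, ν p < ν w := by
  obtain ⟨-, -, w, hw, hlt⟩ := hm
  rcases h.mem_iff.1 hw with rfl | ⟨-, hw⟩
  · exact Or.inl hlt
  · exact Or.inr ⟨w, hw, hlt⟩

lemma insert_erase_both (h : IsSwap k CR CB a b) (hx : x ∉ CR) (hxa : x ≠ a) (hp : p ∈ CR)
    (hpb : p ≠ b) : IsSwap k (insert x (CR.erase p)) (insert x (CB.erase p)) a b where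
  new_notMem := by
    rw [mem_insert, mem_erase]
    rintro (h' | ⟨-, h'⟩)
    · exact hxa h'.symm
    · exact h.new_notMem h'
  old_mem := mem_insert_of_mem (mem_erase.2 ⟨hpb.symm, h.old_mem⟩)
  card_eq := (card_insert_erase hx hp).trans h.card_eq
  eq := by
    have hap : a ≠ p := fun hap => h.new_notMem (hap ▸ hp)
    have hxb : x ≠ b := fun hxb => hx (hxb ▸ h.old_mem)
    ext y
    simp only [h.eq, mem_insert, mem_erase]
    grind

lemma balancedStep_of_mem (h : IsSwap k CR CB a b) (hc : ν a < ν b → 1 ≤ c)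
    (hν' : ∀ y ≠ x, ν' y = ν y) (hR : CacheStep k x CR pR CR') (hB : CacheStep k x CB pB CB')
    (hpB : ChosenFrom (hybridCandidates ν x CR CB pR) CB pB) (hx : x ∈ CR) :
    BalancedStep ν ν' k x CR CB pR pB CR' CB' c := by
  have hRm : ¬IsMistake ν k x CR pR := fun hm => hm.1 hx
  obtain rfl := (hR.eq_of_mem hx).symm
  by_cases hxb : x = b
  · have hxB : x ∉ CB := hxb ▸ h.old_notMem
    obtain ⟨-, rfl⟩ := hB.evict hxB h.card_eq'
    refine ⟨0, Or.inl ?_, ?_⟩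
    · rw [h.victim_eq_new hpB (Or.inl hx), h.erase_new, hxb, insert_erase h.old_mem]
    · rw [if_neg (not_not.2 hx), if_pos hxB, if_neg hRm]
      split_ifs <;> omega
  · have hxB : x ∈ CB := h.mem_iff.2 (Or.inr ⟨hxb, hx⟩)
    obtain rfl := (hB.eq_of_mem hxB).symm
    refine ⟨c, Or.inr ⟨a, b, h, ?_⟩, ?_⟩
    · rwa [hν' a fun hax => h.new_notMem (hax ▸ hx), hν' b fun hbx => hxb hbx.symm]
    · rw [if_neg (not_not.2 hx), if_neg (not_not.2 hxB), if_neg hRm,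
        if_neg fun hm : IsMistake ν k x CB pB => hm.1 hxB]

lemma balancedStep_of_eq_new (h : IsSwap k CR CB a b) (hc : ν a < ν b → 1 ≤ c)
    (hmin : ∀ y ≠ a, ν a < ν y) (hν' : ∀ y ≠ a, ν' y = ν y) (hR : CacheStep k a CR pR CR')
    (hB : CacheStep k a CB pB CB') : BalancedStep ν ν' k a CR CB pR pB CR' CB' c := by
  -- `a` is requested now, so it is the page with the earliest next use
  have hc1 : 1 ≤ c := hc (hmin b h.ne.symm)
  obtain ⟨hpR, rfl⟩ := hR.evict h.new_notMem h.card_eq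
  obtain rfl := (hB.eq_of_mem h.new_mem).symm
  have hBm : ¬IsMistake ν k a CB pB := fun hm => hm.1 h.new_mem
  by_cases hpb : pR = b
  · refine ⟨0, Or.inl (by rw [hpb, h.eq]), ?_⟩
    rw [if_pos h.new_notMem, if_neg (not_not.2 h.new_mem), if_neg hBm]
    omega
  · have hpa : pR ≠ a := fun hpa => h.new_notMem (hpa ▸ hpR)
    refine ⟨if IsMistake ν k a CR pR then 1 else 0,
      Or.inr ⟨pR, b, h.eq ▸ isSwap_insert_erase h.new_notMem h.card_eq hpR h.old_mem hpb,
        fun hlt => ?_⟩, ?_⟩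
    · rw [hν' pR hpa, hν' b h.ne.symm] at hlt
      rw [if_pos ⟨h.new_notMem, h.card_eq, b, h.old_mem, hlt⟩]
    · rw [if_pos h.new_notMem, if_neg (not_not.2 h.new_mem), if_neg hBm]
      omega

lemma balancedStep_of_notMem (h : IsSwap k CR CB a b) (hc : ν a < ν b → 1 ≤ c)
    (hν' : ∀ y ≠ x, ν' y = ν y) (hR : CacheStep k x CR pR CR') (hB : CacheStep k x CB pB CB')
    (hpB : ChosenFrom (hybridCandidates ν x CR CB pR) CB pB) (hx : x ∉ CR) (hxa : x ≠ a) :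
    BalancedStep ν ν' k x CR CB pR pB CR' CB' c := by
  have hxB : x ∉ CB := fun hxB => (h.mem_iff.1 hxB).elim hxa fun h' => hx h'.2
  obtain ⟨hpR, rfl⟩ := hR.evict hx h.card_eq
  obtain ⟨-, rfl⟩ := hB.evict hxB h.card_eq'
  have hRm : ∀ w ∈ CR, ν pR < ν w → IsMistake ν k x CR pR :=
    fun w hw hlt => ⟨hx, h.card_eq, w, hw, hlt⟩
  have hν'a : ν' a = ν a := hν' a (Ne.symm hxa)
  have hν'b : ν' b = ν b := hν' b fun hbx => hx (hbx ▸ h.old_mem)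
  simp only [BalancedStep, if_pos hx, if_pos hxB]
  by_cases hpb : pR = b
  · -- R evicts the page that B lacks; B evicts its extra page and the caches merge
    have hq := h.victim_eq_new hpB (Or.inr (Or.inl (hpb ▸ h.old_notMem)))
    subst pB pR
    refine ⟨0, Or.inl (by rw [h.erase_new]), ?_⟩
    by_cases hab : ν a < ν b
    · have := hc hab
      split_ifs <;> omega
    · have hmB : IsMistake ν k x CB a → IsMistake ν k x CR b := fun hm =>
        (h.exists_lt_of_isMistake hm).elim (fun hlt => absurd hlt (lt_irrefl _))
          fun ⟨w, hw, hlt⟩ => hRm w hw (by omega)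
      have := ite_le_ite_of_imp hmB
      omega
  have hpB' : pR ∈ CB := h.mem_iff.2 (Or.inr ⟨hpb, hpR⟩)
  by_cases hcase : ν b ≤ ν pR ∧ ν pR < ν a
  · -- B keeps R's victim and evicts its extra page instead: the new pair is (pR, b)
    have hq := h.victim_eq_new hpB (Or.inr (Or.inr hcase))
    subst pB
    refine ⟨0, Or.inr ⟨pR, b, ?_, fun hlt => ?_⟩, ?_⟩
    · rw [h.erase_new]
      exact isSwap_insert_erase hx h.card_eq hpR h.old_mem hpb
    · rw [hν' pR fun hpx => hx (hpx ▸ hpR), hν'b] at hlt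
      omega
    · have hmB : IsMistake ν k x CB a → IsMistake ν k x CR pR := fun hm =>
        (h.exists_lt_of_isMistake hm).elim (fun hlt => absurd hlt (lt_irrefl _))
          fun ⟨w, hw, hlt⟩ => hRm w hw (by omega)
      have := ite_le_ite_of_imp hmB
      omega
  · -- both evict R's victim and the pair (a, b) persists
    have hq := h.victim_eq_follow hpB hx hpB' hcase
    subst pB
    refine ⟨c, Or.inr ⟨a, b, h.insert_erase_both hx hxa hpR hpb, by rwa [hν'a, hν'b]⟩, ?_⟩
    have hmB : IsMistake ν k x CB pR → IsMistake ν k x CR pR := fun hm =>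
      (h.exists_lt_of_isMistake hm).elim (fun hlt => hRm b h.old_mem (by omega))
        fun ⟨w, hw, hlt⟩ => hRm w hw hlt
    have := ite_le_ite_of_imp hmB
    omega

end IsSwap

lemma Coupled.balancedStep (hcpl : Coupled ν k CR CB c) (hmin : ∀ y ≠ x, ν x < ν y)
    (hν' : ∀ y ≠ x, ν' y = ν y) (hR : CacheStep k x CR pR CR') (hB : CacheStep k x CB pB CB')
    (hpB : ChosenFrom (hybridCandidates ν x CR CB pR) CB pB) :
    BalancedStep ν ν' k x CR CB pR pB CR' CB' c := by
  rcases hcpl with rfl | ⟨a, b, h, hc⟩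
  · refine balancedStep_self hR hB fun hx hc => ?_
    have hpR := (hR.evict hx hc).1
    rw [hybridCandidates_self hx hpR] at hpB
    exact hpB.eq_of_singleton hpR
  by_cases hx : x ∈ CR
  · exact h.balancedStep_of_mem hc hν' hR hB hpB hx
  by_cases hxa : x = a
  · subst hxa
    exact h.balancedStep_of_eq_new hc hmin hν' hR hB
  · exact h.balancedStep_of_notMem hc hν' hR hB hpB hx hxa

end Coupling

noncomputable def pick {α : Type*} (s : Finset α) (d : α) : α :=
  if h : s.Nonempty then Classical.choose h else d

lemma pick_mem {α : Type*} {s : Finset α} {d : α} (h : s.Nonempty) : pick s d ∈ s := by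
  rw [pick, dif_pos h]
  exact Classical.choose_spec h

noncomputable def cacheUpdate (k : ℕ) (x : S) (C : Finset S) (p : S) : Finset S :=
  if x ∈ C ∨ C.card < k then insert x C else insert x (C.erase p)

noncomputable def victimOf (d : S) (V : Finset S) (C : Finset S) : S := pick (V ∩ C) (pick C d)

lemma victimOf_mem {d : S} {V C : Finset S} (hC : C.Nonempty) : victimOf d V C ∈ C := by
  by_cases h : (V ∩ C).Nonempty
  · exact mem_of_mem_inter_right (pick_mem h)
  · rw [victimOf, pick, dif_neg h]
    exact pick_mem hC

lemma chosenFrom_victimOf {d : S} {V C : Finset S} : ChosenFrom V C (victimOf d V C) :=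
  fun h => mem_of_mem_inter_left (pick_mem h)

namespace CacheRun

variable {k T : ℕ} {σ : ℕ → S}

noncomputable def cacheOfVictims (k T : ℕ) (σ : ℕ → S) (V : ℕ → Finset S → Finset S) :
    ℕ → Finset S
  | 0 => ∅
  | s + 1 =>
    if s + 1 ≤ T then
      cacheUpdate k (σ (s + 1)) (cacheOfVictims k T σ V s)
        (victimOf (σ 0) (V (s + 1) (cacheOfVictims k T σ V s)) (cacheOfVictims k T σ V s))
    else cacheOfVictims k T σ V s

lemma card_cacheOfVictims_le (hk : 1 ≤ k) (V : ℕ → Finset S → Finset S) (s : ℕ) :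
    (cacheOfVictims k T σ V s).card ≤ k := by
  induction s with
  | zero => simp [cacheOfVictims]
  | succ s ih =>
    rw [cacheOfVictims]
    split_ifs with hs
    · rw [cacheUpdate]
      split_ifs with h
      · rcases h with h | h
        · rwa [insert_eq_of_mem h]
        · exact (card_insert_le _ _).trans h
      · rw [not_or, not_lt] at h
        have hne : (cacheOfVictims k T σ V s).Nonempty := card_pos.1 (by omega)
        rw [card_insert_erase h.1 (victimOf_mem hne)]
        exact ih
    · exact ih

-- On a full-cache miss at time `u`, evict a page of `V u C` if the cache `C` has one, and
-- otherwise any cached page.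
noncomputable def ofVictims (hk : 1 ≤ k) (V : ℕ → Finset S → Finset S) : CacheRun S k T σ where
  C := cacheOfVictims k T σ V
  p u := victimOf (σ 0) (V u (cacheOfVictims k T σ V (u - 1))) (cacheOfVictims k T σ V (u - 1))
  init := rfl
  card_le := card_cacheOfVictims_le hk V
  hit u hu huT h := by
    obtain ⟨s, rfl⟩ : ∃ s, u = s + 1 := ⟨u - 1, by omega⟩
    simp only [Nat.add_sub_cancel] at h ⊢
    rw [cacheOfVictims, if_pos huT, cacheUpdate, if_pos h]
  evict_mem u _ _ _ hc := victimOf_mem (card_pos.1 (by omega))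
  evict u hu huT hx hc := by
    obtain ⟨s, rfl⟩ : ∃ s, u = s + 1 := ⟨u - 1, by omega⟩
    simp only [Nat.add_sub_cancel] at hx hc ⊢
    rw [cacheOfVictims, if_pos huT, cacheUpdate, if_neg (not_or.2 ⟨hx, hc.ge.not_gt⟩)]

lemma chosenFrom_ofVictims (hk : 1 ≤ k) (V : ℕ → Finset S → Finset S) (s : ℕ) :
    ChosenFrom (V (s + 1) ((ofVictims hk V : CacheRun S k T σ).C s))
      ((ofVictims hk V : CacheRun S k T σ).C s) ((ofVictims hk V : CacheRun S k T σ).p (s + 1)) :=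
  chosenFrom_victimOf

lemma cacheStep (Q : CacheRun S k T σ) {s : ℕ} (hs : s + 1 ≤ T) :
    CacheStep k (σ (s + 1)) (Q.C s) (Q.p (s + 1)) (Q.C (s + 1)) := by
  by_cases h : σ (s + 1) ∈ Q.C s ∨ (Q.C s).card < k
  · exact Or.inl ⟨h, Q.hit (s + 1) (by omega) hs h⟩
  · rw [not_or, not_lt] at h
    have hc := le_antisymm (Q.card_le s) h.2
    exact Or.inr ⟨h.1, hc, Q.evict_mem (s + 1) (by omega) hs h.1 hc,
      Q.evict (s + 1) (by omega) hs h.1 hc⟩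

end CacheRun

section Runs

variable {k T : ℕ} {σ : ℕ → S} {s : ℕ} {x : S}

lemma CacheRun.exists_eq_of_mem (Q : CacheRun S k T σ) (hs : s ≤ T) (hx : x ∈ Q.C s) :
    ∃ i, 1 ≤ i ∧ i ≤ s ∧ σ i = x := by
  induction s with
  | zero => rw [Q.init] at hx; exact absurd hx (notMem_empty x)
  | succ s ih =>
    rcases mem_insert.1 ((Q.cacheStep hs).subset hx) with rfl | hx
    · exact ⟨s + 1, by omega, le_rfl, rfl⟩
    · obtain ⟨i, h1, h2, h3⟩ := ih (by omega) hx
      exact ⟨i, h1, by omega, h3⟩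

lemma mem_lastIdx {Q : CacheRun S k T σ} {i : ℕ} :
    i ∈ lastIdx Q s ↔ (1 ≤ i ∧ i ≤ s) ∧ σ i ∈ Q.C s ∧ ∀ j, i < j → j ≤ s → σ j ≠ σ i := by
  unfold lastIdx
  simp only [mem_filter, mem_Icc, and_imp, Nat.add_one_le_iff]

lemma CacheRun.exists_mem_lastIdx (Q : CacheRun S k T σ) (hs : s ≤ T) (hx : x ∈ Q.C s) :
    ∃ i ∈ lastIdx Q s, σ i = x := by
  obtain ⟨i, h1, h2, h3⟩ := Q.exists_eq_of_mem hs hx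
  have hspec : σ (Nat.findGreatest (σ · = x) s) = x :=
    Nat.findGreatest_spec (P := (σ · = x)) h2 h3
  refine ⟨Nat.findGreatest (σ · = x) s, mem_lastIdx.2 ⟨⟨h1.trans (Nat.le_findGreatest h2 h3),
    Nat.findGreatest_le s⟩, by rwa [hspec], fun j hj1 hj2 => ?_⟩, hspec⟩
  rw [hspec]
  exact Nat.findGreatest_is_greatest hj1 hj2

lemma nextReq_eq_nextUse {Q : CacheRun S k T σ} {i : ℕ} (hi : i ∈ lastIdx Q s) :
    nextReq σ T i = nextUse σ T s (σ i) := by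
  obtain ⟨⟨-, hi⟩, -, hlast⟩ := mem_lastIdx.1 hi
  exact (nextUse_eq_of_forall_ne hi hlast).symm

lemma IsBelady.nextUse_le {A : CacheRun S k T σ} (hA : IsBelady A) (hs : s + 1 ≤ T)
    (hx : σ (s + 1) ∉ A.C s) (hc : (A.C s).card = k) {y : S} (hy : y ∈ A.C s) :
    nextUse σ T s y ≤ nextUse σ T s (A.p (s + 1)) := by
  have hp : A.p (s + 1) ∈ A.C s := ((A.cacheStep hs).evict hx hc).1
  obtain ⟨j, hj, hσj⟩ := A.exists_mem_lastIdx (by omega) hp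
  obtain ⟨i, hi, hσi⟩ := A.exists_mem_lastIdx (by omega) hy
  have := hA (s + 1) ⟨by omega, hs, hx, hc⟩ j hj hσj.symm i hi
  rwa [nextReq_eq_nextUse hi, nextReq_eq_nextUse hj, hσi, hσj] at this

noncomputable def missCount (Q : CacheRun S k T σ) (s : ℕ) : ℕ :=
  ((Icc 1 s).filter fun u => σ u ∉ Q.C (u - 1)).card

noncomputable def mistakeCount (Q : CacheRun S k T σ) (s : ℕ) : ℕ :=
  ((Icc 1 s).filter fun u =>
    IsMistake (nextUse σ T (u - 1)) k (σ u) (Q.C (u - 1)) (Q.p u)).card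

lemma card_filter_Icc_one_succ (P : ℕ → Prop) [DecidablePred P] (s : ℕ) :
    ((Icc 1 (s + 1)).filter P).card = ((Icc 1 s).filter P).card + if P (s + 1) then 1 else 0 := by
  rw [card_filter, card_filter, sum_Icc_succ_top (by omega)]

lemma missCount_succ (Q : CacheRun S k T σ) (s : ℕ) :
    missCount Q (s + 1) = missCount Q s + if σ (s + 1) ∉ Q.C s then 1 else 0 :=
  card_filter_Icc_one_succ _ s

lemma mistakeCount_succ (Q : CacheRun S k T σ) (s : ℕ) :
    mistakeCount Q (s + 1) = mistakeCount Q s +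
      if IsMistake (nextUse σ T s) k (σ (s + 1)) (Q.C s) (Q.p (s + 1)) then 1 else 0 :=
  card_filter_Icc_one_succ _ s

lemma misses_eq_of_forall_C_eq {Q Q' : CacheRun S k T σ} (h : ∀ s < T, Q.C s = Q'.C s) :
    misses Q = misses Q' := by
  unfold misses
  congr 1
  refine filter_congr fun u hu => ?_
  rw [h (u - 1) (by rw [mem_Icc] at hu; omega)]

end Runs

section Hybrid

variable {k T : ℕ} {σ : ℕ → S} {s t : ℕ}

-- The hybrid run copies `R` before `t` (while the caches agree the candidates reduce to
-- `{R.p u}`), evicts Belady's page at `t`, and shadows `R` afterwards.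
noncomputable def hybridVictims (R A : CacheRun S k T σ) (t u : ℕ) (CB : Finset S) : Finset S :=
  if u = t then {A.p u} else hybridCandidates (nextUse σ T (u - 1)) (σ u) (R.C (u - 1)) CB (R.p u)

noncomputable def hybrid (hk : 1 ≤ k) (R A : CacheRun S k T σ) (t : ℕ) : CacheRun S k T σ :=
  CacheRun.ofVictims hk (hybridVictims R A t)

lemma chosenFrom_hybrid (hk : 1 ≤ k) (R A : CacheRun S k T σ) (t s : ℕ) :
    ChosenFrom (hybridVictims R A t (s + 1) ((hybrid hk R A t).C s)) ((hybrid hk R A t).C s)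
      ((hybrid hk R A t).p (s + 1)) :=
  CacheRun.chosenFrom_ofVictims hk _ s

lemma hybrid_C_of_lt (hk : 1 ≤ k) (R A : CacheRun S k T σ) (ht : t ≤ T) (hs : s < t) :
    (hybrid hk R A t).C s = R.C s := by
  induction s with
  | zero => rw [R.init]; rfl
  | succ s ih =>
    have hsT : s + 1 ≤ T := by omega
    have hC := ih (by omega)
    have hB := (hybrid hk R A t).cacheStep hsT
    have hpB := chosenFrom_hybrid hk R A t s
    rw [hC] at hB hpB
    refine hB.eq (R.cacheStep hsT) fun hx hc => ?_
    have hpR := ((R.cacheStep hsT).evict hx hc).1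
    simp only [hybridVictims, if_neg (show s + 1 ≠ t by omega), Nat.add_sub_cancel] at hpB
    rw [hybridCandidates_self hx hpR] at hpB
    exact hpB.eq_of_singleton hpR

lemma hybrid_C_eq_of_le (hk : 1 ≤ k) {R A : CacheRun S k T σ} (ht1 : 1 ≤ t) (ht : t ≤ T)
    (hRA : ∀ u < t, R.C u = A.C u) (hs : s ≤ t) : (hybrid hk R A t).C s = A.C s := by
  rcases hs.lt_or_eq with hs | rfl
  · exact (hybrid_C_of_lt hk R A ht hs).trans (hRA s hs)
  obtain ⟨s, rfl⟩ : ∃ s', s = s' + 1 := ⟨s - 1, by omega⟩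
  have hC : (hybrid hk R A (s + 1)).C s = A.C s :=
    (hybrid_C_of_lt hk R A ht (by omega)).trans (hRA s (by omega))
  have hB := (hybrid hk R A (s + 1)).cacheStep ht
  have hpB := chosenFrom_hybrid hk R A (s + 1) s
  rw [hC] at hB hpB
  refine hB.eq (A.cacheStep ht) fun hx hc => ?_
  have hpA := ((A.cacheStep ht).evict hx hc).1
  rw [hybridVictims, if_pos rfl] at hpB
  exact hpB.eq_of_singleton hpA

def Balanced (R B : CacheRun S k T σ) (s c : ℕ) : Prop :=
  Coupled (nextUse σ T s) k (R.C s) (B.C s) c ∧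
    missCount R s + mistakeCount B s + c ≤ missCount B s + mistakeCount R s

lemma Balanced.succ {R B : CacheRun S k T σ} {c : ℕ} (hbal : Balanced R B s c)
    (hstep : BalancedStep (nextUse σ T s) (nextUse σ T (s + 1)) k (σ (s + 1)) (R.C s) (B.C s)
      (R.p (s + 1)) (B.p (s + 1)) (R.C (s + 1)) (B.C (s + 1)) c) :
    ∃ c', Balanced R B (s + 1) c' := by
  obtain ⟨c', hcpl, hle⟩ := hstep
  refine ⟨c', hcpl, ?_⟩
  rw [missCount_succ, missCount_succ, mistakeCount_succ, mistakeCount_succ]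
  have := hbal.2
  omega

lemma hybrid_balanced (hk : 1 ≤ k) {R A : CacheRun S k T σ} (hA : IsBelady A) (ht : t ≤ T)
    (hRA : ∀ u < t, R.C u = A.C u) : ∀ s ≤ T, ∃ c, Balanced R (hybrid hk R A t) s c := by
  intro s hs
  induction s with
  | zero => exact ⟨0, Or.inl (by rw [R.init]; rfl), by simp [missCount, mistakeCount]⟩
  | succ s ih =>
    obtain ⟨c, hbal⟩ := ih (by omega)
    refine hbal.succ ?_
    have hR := R.cacheStep hs
    have hB := (hybrid hk R A t).cacheStep hs
    have hpB := chosenFrom_hybrid hk R A t s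
    have hν' : ∀ y ≠ σ (s + 1), nextUse σ T (s + 1) y = nextUse σ T s y :=
      fun y hy => nextUse_succ_of_ne hy.symm
    by_cases hst : s + 1 = t
    · subst hst
      have hBR := hybrid_C_of_lt hk R A ht (Nat.lt_succ_self s)
      rw [hBR] at hB hpB ⊢
      refine balancedStep_of_maximal hν' hR hB fun hx hc y hy => ?_
      have hRAs := hRA s (by omega)
      rw [hRAs] at hx hc hy hpB
      have hpA := ((A.cacheStep hs).evict hx hc).1
      rw [hybridVictims, if_pos rfl] at hpB
      rw [hpB.eq_of_singleton hpA]
      exact hA.nextUse_le hs hx hc hy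
    · simp only [hybridVictims, if_neg hst, Nat.add_sub_cancel] at hpB
      exact hbal.1.balancedStep (fun y hy => nextUse_self_lt hs hy) hν' hR hB hpB

lemma misses_add_mistakeCount_hybrid_le (hk : 1 ≤ k) {R A : CacheRun S k T σ} (hA : IsBelady A)
    (ht : t ≤ T) (hRA : ∀ u < t, R.C u = A.C u) :
    misses R + mistakeCount (hybrid hk R A t) T ≤ misses (hybrid hk R A t) + mistakeCount R T := by
  obtain ⟨c, -, h⟩ := hybrid_balanced hk hA ht hRA T le_rfl
  exact (Nat.le_add_right _ c).trans h

end Hybrid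

section Main

variable {k T : ℕ} {σ : ℕ → S}

theorem misses_le_misses_add_mistakeCount (hk : 1 ≤ k) {A : CacheRun S k T σ} (hA : IsBelady A)
    (R : CacheRun S k T σ) : misses R ≤ misses A + mistakeCount R T := by
  -- downward induction on the length `m` of the common prefix of `R` and `A`
  refine Nat.decreasingInduction (n := T) (motive := fun m _ => ∀ R : CacheRun S k T σ,
      (∀ s < m, R.C s = A.C s) → misses R ≤ misses A + mistakeCount R T)
    (fun m hmT ih R hRA => ?_) (fun R hRA => ?_) (Nat.zero_le T) R (by simp)
  · by_cases hm : R.C m = A.C m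
    · exact ih R fun s hs => (Nat.lt_succ_iff_lt_or_eq.1 hs).elim (hRA s) fun h => h ▸ hm
    · have hm1 : 1 ≤ m := Nat.pos_of_ne_zero fun h0 => hm (by rw [h0, R.init, A.init])
      have hB := ih (hybrid hk R A m) fun s hs =>
        hybrid_C_eq_of_le hk hm1 hmT.le hRA (Nat.lt_succ_iff.1 hs)
      have := misses_add_mistakeCount_hybrid_le hk hA hmT.le hRA
      omega
  · rw [misses_eq_of_forall_C_eq hRA]
    omega

end Main

section EvictionGraph

variable {k T : ℕ} {σ : ℕ → S}

lemma CacheRun.notMem_of_forall_ne (Q : CacheRun S k T σ) {x : S} {v w : ℕ} (hx : x ∉ Q.C v)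
    (hvw : v ≤ w) (hw : w ≤ T) (h : ∀ u, v < u → u ≤ w → σ u ≠ x) : x ∉ Q.C w := by
  induction w, hvw using Nat.le_induction with
  | base => exact hx
  | succ w hvw ih =>
    intro hmem
    rcases mem_insert.1 ((Q.cacheStep hw).subset hmem) with h' | h'
    · exact h (w + 1) (by omega) le_rfl h'.symm
    · exact ih (by omega) (fun u h1 h2 => h u h1 (by omega)) h'

lemma eq_of_evictsIdx {Q : CacheRun S k T σ} {u₁ u₂ j : ℕ} (h₁ : EvictsIdx Q u₁ j)
    (h₂ : EvictsIdx Q u₂ j) : u₁ = u₂ := by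
  wlog hlt : u₁ < u₂ generalizing u₁ u₂
  · rcases lt_trichotomy u₁ u₂ with h | h | h
    · exact absurd h hlt
    · exact h
    · exact (this h₂ h₁ h).symm
  exfalso
  obtain ⟨⟨h1, hT1, hx1, hc1⟩, hj1, hp1⟩ := h₁
  obtain ⟨⟨-, hT2, -⟩, hj2, -⟩ := h₂
  obtain ⟨⟨-, hj⟩, hjC, -⟩ := mem_lastIdx.1 hj1
  obtain ⟨-, hjC2, hlast⟩ := mem_lastIdx.1 hj2
  have hout : σ j ∉ Q.C u₁ := by
    rw [Q.evict u₁ h1 hT1 hx1 hc1, hp1, mem_insert, mem_erase]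
    rintro (h | ⟨h, -⟩)
    · exact hx1 (h ▸ hjC)
    · exact h rfl
  exact Q.notMem_of_forall_ne hout (by omega) (by omega)
    (fun u h1 h2 => hlast u (by omega) h2) hjC2

lemma exists_edge_of_isMistake {Q : CacheRun S k T σ} {u : ℕ} (hu : u ∈ Icc 1 T)
    (hm : IsMistake (nextUse σ T (u - 1)) k (σ u) (Q.C (u - 1)) (Q.p u)) :
    ∃ e : ℕ × ℕ, EvictsIdx Q u e.2 ∧ e.1 ∈ lastIdx Q (u - 1) ∧
      nextReq σ T e.2 < nextReq σ T e.1 := by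
  obtain ⟨h1, hT⟩ := mem_Icc.1 hu
  obtain ⟨hx, hc, y, hy, hlt⟩ := hm
  have hp := Q.evict_mem u h1 hT hx hc
  obtain ⟨j, hj, hσj⟩ := Q.exists_mem_lastIdx (by omega) hp
  obtain ⟨i, hi, hσi⟩ := Q.exists_mem_lastIdx (by omega) hy
  refine ⟨(i, j), ⟨⟨h1, hT, hx, hc⟩, hj, hσj.symm⟩, hi, ?_⟩
  rwa [nextReq_eq_nextUse hi, nextReq_eq_nextUse hj, hσi, hσj]

theorem exists_evictionGraph_card_eq (Q : CacheRun S k T σ) :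
    ∃ H : EvictionGraph Q, H.E.card = mistakeCount Q T := by
  set M := (Icc 1 T).filter fun u =>
    IsMistake (nextUse σ T (u - 1)) k (σ u) (Q.C (u - 1)) (Q.p u)
  have hedge : ∀ u, ∃ e : ℕ × ℕ, u ∈ M → EvictsIdx Q u e.2 ∧ e.1 ∈ lastIdx Q (u - 1) ∧
      nextReq σ T e.2 < nextReq σ T e.1 := fun u => by
    by_cases hu : u ∈ M
    · obtain ⟨e, he⟩ := exists_edge_of_isMistake (mem_filter.1 hu).1 (mem_filter.1 hu).2
      exact ⟨e, fun _ => he⟩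
    · exact ⟨(0, 0), fun h => absurd h hu⟩
  choose e he using hedge
  have hinj : Set.InjOn e M := fun u hu v hv huv =>
    eq_of_evictsIdx (he u hu).1 (huv ▸ (he v hv).1)
  refine ⟨⟨M.image e, Function.invFunOn e M, fun e₁ he₁ e₂ he₂ htime => ?_, fun e' he' => ?_⟩,
    card_image_of_injOn hinj⟩
  · rw [← Function.invFunOn_eq (mem_image.1 he₁), ← Function.invFunOn_eq (mem_image.1 he₂), htime]
  · have := he _ (Function.invFunOn_mem (mem_image.1 he'))
    rwa [Function.invFunOn_eq (mem_image.1 he')] at this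

end EvictionGraph

/-- For any run of a feasible eviction strategy there is an eviction
graph `H` with `OBJ_Q ≤ OPT + |E(H)|`. -/
theorem stmt3 {S : Type} [DecidableEq S] (k T : ℕ) (hk : 1 ≤ k) (σ : ℕ → S)
    (R A : CacheRun S k T σ) (hA : IsBelady A) :
    ∃ H : EvictionGraph R, misses R ≤ misses A + H.E.card := by
  obtain ⟨H, hH⟩ := exists_evictionGraph_card_eq R
  exact ⟨H, hH ▸ misses_le_misses_add_mistakeCount hk hA R⟩

end Caching
end

section
/- Let B be the BlindOracle strategy and let H_B be any eviction graph of its run. Then the number of edges of H_B is at most η, the total prediction loss: |E(H_B)| ≤ η. -/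
/-!
Every edge `(i, j)` of an eviction graph of BlindOracle has `ν j < ν i` and, by the choice
rule, `ω i ≤ ω j`. Charge it to `j` if `ν j < ω j` and to `i` otherwise. Distinct edges have
distinct `ν j`: since `ν j ≤ T`, it determines `j`, a last-request index is evicted at most
once, and the eviction time determines the edge. Hence an index `j` with `ν j < ω j` receives
at most one edge, and `1 ≤ η(j)`, while the edges charged to `i` have
`ω i ≤ ω j ≤ ν j < ν i`, so there are at most `ν i - ω i ≤ η(i)` of them.
-/

namespace Caching

attribute [local instance low] Classical.propDecidable

variable {S : Type} [DecidableEq S]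

section Charging

variable {E : Finset (ℕ × ℕ)} {ν ω : ℕ → ℕ}

def charge (ν ω : ℕ → ℕ) (e : ℕ × ℕ) : ℕ := if ν e.2 < ω e.2 then e.2 else e.1

theorem card_filter_charge_eq_le_dist (hinj : Set.InjOn (fun e : ℕ × ℕ => ν e.2) E)
    (hω : ∀ e ∈ E, ω e.1 ≤ ω e.2) (hν : ∀ e ∈ E, ν e.2 < ν e.1) (m : ℕ) :
    (E.filter fun e => charge ν ω e = m).card ≤ Nat.dist (ν m) (ω m) := by
  rcases lt_or_ge (ν m) (ω m) with hm | hm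
  · have hsnd : ∀ e ∈ E.filter (fun e => charge ν ω e = m), e.2 = m := by
      intro e he
      obtain ⟨heE, hcharge⟩ := Finset.mem_filter.mp he
      unfold charge at hcharge
      split_ifs at hcharge with hover
      · exact hcharge
      · subst hcharge
        have := hω e heE
        have := hν e heE
        omega
    calc (E.filter fun e => charge ν ω e = m).card
        ≤ ({ν m} : Finset ℕ).card := by
          refine Finset.card_le_card_of_injOn (fun e => ν e.2) (fun e he => ?_)
            (hinj.mono (Finset.coe_subset.mpr (Finset.filter_subset _ _)))
          simp [hsnd e he]
      _ ≤ Nat.dist (ν m) (ω m) := by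
          simp only [Finset.card_singleton, Nat.dist]
          omega
  · have hfst : ∀ e ∈ E.filter (fun e => charge ν ω e = m), e.1 = m ∧ ω e.2 ≤ ν e.2 := by
      intro e he
      obtain ⟨-, hcharge⟩ := Finset.mem_filter.mp he
      unfold charge at hcharge
      split_ifs at hcharge with hover
      · rw [hcharge] at hover
        omega
      · exact ⟨hcharge, by omega⟩
    calc (E.filter fun e => charge ν ω e = m).card
        ≤ (Finset.Ico (ω m) (ν m)).card := by
          refine Finset.card_le_card_of_injOn (fun e => ν e.2) (fun e he => ?_)
            (hinj.mono (Finset.coe_subset.mpr (Finset.filter_subset _ _)))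
          obtain ⟨heE, -⟩ := Finset.mem_filter.mp he
          obtain ⟨hfst, hpred⟩ := hfst e he
          have := hω e heE
          have := hν e heE
          rw [hfst] at *
          simp only [Finset.coe_Ico, Set.mem_Ico]
          omega
      _ ≤ Nat.dist (ν m) (ω m) := by
          simp only [Nat.card_Ico, Nat.dist]
          omega

theorem card_le_sum_dist {s : Finset ℕ} (hinj : Set.InjOn (fun e : ℕ × ℕ => ν e.2) E)
    (hω : ∀ e ∈ E, ω e.1 ≤ ω e.2) (hν : ∀ e ∈ E, ν e.2 < ν e.1)
    (hs : ∀ e ∈ E, e.1 ∈ s ∧ e.2 ∈ s) :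
    E.card ≤ ∑ m ∈ s, Nat.dist (ν m) (ω m) := by
  have hcharge : ∀ e ∈ E, charge ν ω e ∈ s := fun e he => by
    unfold charge
    split_ifs
    exacts [(hs e he).2, (hs e he).1]
  calc E.card = ∑ m ∈ s, (E.filter fun e => charge ν ω e = m).card :=
        Finset.card_eq_sum_card_fiberwise hcharge
    _ ≤ ∑ m ∈ s, Nat.dist (ν m) (ω m) :=
        Finset.sum_le_sum fun m _ => card_filter_charge_eq_le_dist hinj hω hν m

end Charging

theorem nextReq_le (σ : ℕ → S) (T t : ℕ) : nextReq σ T t ≤ T + 1 := by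
  unfold nextReq
  split_ifs with h
  · obtain ⟨s, hs⟩ := h
    exact (Nat.find_min' _ hs).trans (hs.2.1.trans T.le_succ)
  · exact le_rfl

theorem nextReq_spec {σ : ℕ → S} {T j : ℕ} (hle : nextReq σ T j ≤ T) :
    j < nextReq σ T j ∧ σ (nextReq σ T j) = σ j ∧
      ∀ s, j < s → s < nextReq σ T j → σ s ≠ σ j := by
  unfold nextReq at hle ⊢
  split_ifs at hle ⊢ with h
  · refine ⟨(Nat.find_spec h).1, (Nat.find_spec h).2.2, fun s hjs hs hσ => ?_⟩
    exact Nat.find_min h hs ⟨hjs, (hs.trans_le hle).le, hσ⟩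
  · omega

theorem nextReq_injective_of_le {σ : ℕ → S} {T j j' : ℕ} (hle : nextReq σ T j ≤ T)
    (heq : nextReq σ T j = nextReq σ T j') : j = j' := by
  obtain ⟨hj, hσj, hfirst⟩ := nextReq_spec hle
  obtain ⟨hj', hσj', hfirst'⟩ := nextReq_spec (heq ▸ hle)
  have hσ : σ j = σ j' := by rw [← hσj, heq, hσj']
  rcases lt_trichotomy j j' with h | h | h
  · exact absurd hσ.symm (hfirst j' h (by omega))
  · exact h
  · exact absurd hσ (hfirst' j h (by omega))

namespace CacheRun

variable {k T : ℕ} {σ : ℕ → S} (R : CacheRun S k T σ)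

theorem C_subset_insert {t : ℕ} (h1 : 1 ≤ t) (h2 : t ≤ T) :
    R.C t ⊆ insert (σ t) (R.C (t - 1)) := by
  by_cases hc : σ t ∈ R.C (t - 1) ∨ (R.C (t - 1)).card < k
  · rw [R.hit t h1 h2 hc]
  · push Not at hc
    rw [R.evict t h1 h2 hc.1 (le_antisymm (R.card_le _) hc.2)]
    exact Finset.insert_subset_insert _ (Finset.erase_subset _ _)

theorem exists_request_of_not_mem_of_mem {a : S} {t t' : ℕ} (htt' : t ≤ t') (ht' : t' ≤ T)
    (ha : a ∉ R.C t) (ha' : a ∈ R.C t') : ∃ s, t < s ∧ s ≤ t' ∧ σ s = a := by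
  induction t', htt' using Nat.le_induction with
  | base => exact absurd ha' ha
  | succ n htn ih =>
    rcases Finset.mem_insert.mp (R.C_subset_insert n.succ_pos ht' ha') with h | h
    · exact ⟨n + 1, by omega, le_rfl, h.symm⟩
    · obtain ⟨s, hts, hsn, hσ⟩ := ih (by omega) h
      exact ⟨s, hts, by omega, hσ⟩

theorem not_evictsIdx_of_lt {t t' j : ℕ} (h : EvictsIdx R t j) (hlt : t < t') :
    ¬ EvictsIdx R t' j := by
  rintro ⟨⟨-, ht'T, -, -⟩, hj', -⟩
  obtain ⟨⟨ht1, htT, hmiss, hcard⟩, hj, hp⟩ := h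
  simp only [lastIdx, Finset.mem_filter, Finset.mem_Icc] at hj hj'
  have hevicted : σ j ∉ R.C t := by
    have hne : σ j ≠ σ t := fun he => hmiss (he ▸ hj.2.1)
    simp [R.evict t ht1 htT hmiss hcard, hne, hp]
  obtain ⟨s, hts, hst', hσ⟩ :=
    R.exists_request_of_not_mem_of_mem (by omega) (by omega) hevicted hj'.2.1
  exact hj'.2.2 s ⟨by omega, hst'⟩ hσ

theorem evictsIdx_time_unique {t t' j : ℕ} (h : EvictsIdx R t j) (h' : EvictsIdx R t' j) :
    t = t' := by
  rcases lt_trichotomy t t' with hlt | heq | hlt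
  · exact absurd h' (R.not_evictsIdx_of_lt h hlt)
  · exact heq
  · exact absurd h (R.not_evictsIdx_of_lt h' hlt)

end CacheRun

namespace EvictionGraph

variable {k T : ℕ} {σ : ℕ → S} {R : CacheRun S k T σ} (H : EvictionGraph R)

theorem injOn_nextReq_snd : Set.InjOn (fun e : ℕ × ℕ => nextReq σ T e.2) H.E := by
  intro e he e' he' heq
  obtain ⟨hevict, -, hlt⟩ := H.mistake e he
  have hle : nextReq σ T e.2 ≤ T := by
    have := nextReq_le σ T e.1
    omega
  have hsnd : e.2 = e'.2 := nextReq_injective_of_le hle heq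
  refine H.time_inj e he e' he' (R.evictsIdx_time_unique hevict ?_)
  exact hsnd ▸ (H.mistake e' he').1

theorem mem_Icc (e : ℕ × ℕ) (he : e ∈ H.E) : e.1 ∈ Finset.Icc 1 T ∧ e.2 ∈ Finset.Icc 1 T := by
  obtain ⟨⟨⟨-, hT, -⟩, hj, -⟩, hi, -⟩ := H.mistake e he
  simp only [lastIdx, Finset.mem_filter, Finset.mem_Icc] at hi hj ⊢
  omega

theorem pred_fst_le_pred_snd {ω : ℕ → ℕ} (hR : IsBlindOracle R ω) (e : ℕ × ℕ)
    (he : e ∈ H.E) : ω e.1 ≤ ω e.2 := by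
  obtain ⟨⟨hstep, hj, hp⟩, hi, -⟩ := H.mistake e he
  exact hR _ hstep _ hj hp _ hi

end EvictionGraph

theorem stmt5_general {S : Type} [DecidableEq S] (k T : ℕ) (σ : ℕ → S) (ω : ℕ → ℕ)
    (B : CacheRun S k T σ) (hB : IsBlindOracle B ω) (H : EvictionGraph B) :
    H.E.card ≤ totalLoss σ T ω :=
  card_le_sum_dist H.injOn_nextReq_snd (H.pred_fst_le_pred_snd hB)
    (fun e he => (H.mistake e he).2.2) H.mem_Icc

/-- Any eviction graph of a run of BlindOracle has at most `η` edges. -/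
theorem stmt5 {S : Type} [DecidableEq S] (k T : ℕ) (hk : 1 ≤ k) (σ : ℕ → S) (ω : ℕ → ℕ)
    (B : CacheRun S k T σ) (hB : IsBlindOracle B ω) (H : EvictionGraph B) :
    H.E.card ≤ totalLoss σ T ω :=
  stmt5_general k T σ ω B hB H

end Caching
end

section
/- Let B be the AlternatingOracle strategy (on a fixed realization of its random choices) and let H_B be an eviction graph of its run with colored edges such that same-colored edges share a source and their targets, in order, form a chain. Suppose the edges (a, b₁),…,(a, b_d) all have the same color and (b₁,…,b_d) is a divisible chain. Let ψ denote the maximum of the number of short triples in the left group and the number of short triples in the right group of this chain. Then Σ_{i=1}^d η(b_i) ≥ (d/6 − ψ)²·k/20, where η(t) = |ν(t) − ω(t)|. -/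
namespace Caching

attribute [local instance low] Classical.propDecidable

variable {S : Type} [DecidableEq S]

/-!
The common source `a` is cached whenever a link `b i` is evicted (at time `τ i`). BlindOracle
preferred `b (3r)` to `a`, so `ω (b (3r)) ≥ ω a`; Corrector evicted `b (3r+2)` while `a` was
cached, so `ω (b (3r+2)) ≤ ω a` once `ω a < τ (3r+2)` is provably wrong. If `ω a ≥ τ (3m)`, the
prediction for each left-group BlindOracle link overshoots its next request `τ (3r+1)` by at
least the intermediate-link lengths of all later left triples; otherwise the prediction for each
right-group Corrector link undershoots its next request by at least those of all earlier right
triples. At least `n ≥ m - ψ` triples of the group are long (`L > k/10`), so the losses add up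
to more than `(k/10)(1 + 2 + ⋯ + n) ≥ k (m - ψ)² / 20`.
-/

lemma two_mul_sum_card_filter_ge {α : Type*} [LinearOrder α] (s : Finset α) :
    2 * ∑ r ∈ s, (s.filter fun r' => r ≤ r').card = s.card * (s.card + 1) := by
  induction s using Finset.induction_on_min with
  | empty => simp
  | insert a s ha ih =>
    have ha' : a ∉ s := fun h => lt_irrefl a (ha a h)
    have hself : ((insert a s).filter fun r' => a ≤ r') = insert a s :=
      Finset.filter_true_of_mem fun x hx => by
        rcases Finset.mem_insert.1 hx with rfl | hx
        exacts [le_rfl, (ha x hx).le]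
    have hrest : ∀ r ∈ s, ((insert a s).filter fun r' => r ≤ r').card =
        (s.filter fun r' => r ≤ r').card :=
      fun r hr => by rw [Finset.filter_insert, if_neg (not_le.2 (ha r hr))]
    rw [Finset.sum_insert ha', hself, Finset.sum_congr rfl hrest, Finset.card_insert_of_notMem ha']
    linarith

lemma mul_sq_le_of_tail_bound {α : Type*} [LinearOrder α] {s : Finset α} {k n : ℕ}
    (hn : n ≤ s.card) (f : α → ℕ)
    (h : ∀ r ∈ s, (k + 1) * (s.filter fun r' => r ≤ r').card ≤ f r) :
    k * n ^ 2 ≤ 2 * ∑ r ∈ s, f r :=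
  calc k * n ^ 2 ≤ (k + 1) * (s.card * (s.card + 1)) :=
        Nat.mul_le_mul k.le_succ (by rw [sq]; exact Nat.mul_le_mul hn (by omega))
    _ = 2 * ∑ r ∈ s, (k + 1) * (s.filter fun r' => r ≤ r').card := by
        rw [← Finset.mul_sum, ← two_mul_sum_card_filter_ge]; ring
    _ ≤ 2 * ∑ r ∈ s, f r := Nat.mul_le_mul_left 2 (Finset.sum_le_sum h)

lemma sum_comp_le_sum_of_injOn {ι κ M : Type*} [DecidableEq κ] [AddCommMonoid M] [Preorder M]
    [CanonicallyOrderedAdd M] {s : Finset ι} {t : Finset κ} {g : ι → κ} (hg : Set.InjOn g s)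
    (hst : ∀ r ∈ s, g r ∈ t) (f : κ → M) : ∑ r ∈ s, f (g r) ≤ ∑ i ∈ t, f i := by
  rw [← Finset.sum_image hg]
  exact Finset.sum_le_sum_of_subset (Finset.image_subset_iff.2 hst)

lemma _root_.MonotoneOn.apply_le_apply_of_lt {d : ℕ} {τ : ℕ → ℕ} (hτ : MonotoneOn τ (Set.Iio d))
    {i j : ℕ} (hij : i ≤ j) (hj : j < d) : τ i ≤ τ j :=
  hτ (Set.mem_Iio.2 (hij.trans_lt hj)) (Set.mem_Iio.2 hj) hij

/-- The intermediate-link length `L` of the `r`-th triple, when the links of the chain are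
evicted at the times `τ 0, τ 1, …`. -/
def midLinkLen (τ : ℕ → ℕ) (r : ℕ) : ℕ := τ (3 * r + 2) - τ (3 * r + 1)

lemma sum_midLinkLen_Icc_le {d : ℕ} {τ : ℕ → ℕ} (hτ : MonotoneOn τ (Set.Iio d)) {r j : ℕ}
    (hrj : r ≤ j) (hj : 3 * j + 2 < d) :
    ∑ r' ∈ Finset.Icc r j, midLinkLen τ r' ≤ τ (3 * j + 2) - τ (3 * r + 1) := by
  induction j, hrj using Nat.le_induction with
  | base => simp [midLinkLen]
  | succ j hrj ih =>
    rw [Finset.sum_Icc_succ_top (by omega)]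
    have h1 : τ (3 * r + 1) ≤ τ (3 * j + 2) :=
      hτ.apply_le_apply_of_lt (by omega) (by omega)
    have h2 : τ (3 * j + 2) ≤ τ (3 * (j + 1) + 1) :=
      hτ.apply_le_apply_of_lt (by omega) (by omega)
    have h3 : τ (3 * (j + 1) + 1) ≤ τ (3 * (j + 1) + 2) :=
      hτ.apply_le_apply_of_lt (by omega) (by omega)
    have hL : midLinkLen τ (j + 1) = τ (3 * (j + 1) + 2) - τ (3 * (j + 1) + 1) := rfl
    have := ih (by omega)
    omega

lemma succ_mul_card_le_sum_midLinkLen {k : ℕ} {τ : ℕ → ℕ} {t u : Finset ℕ}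
    (hlong : ∀ r ∈ t, k < 10 * midLinkLen τ r) (htu : t ⊆ u) :
    (k + 1) * t.card ≤ 10 * ∑ r ∈ u, midLinkLen τ r :=
  calc (k + 1) * t.card = t.card • (k + 1) := by rw [smul_eq_mul, mul_comm]
    _ ≤ ∑ r ∈ t, 10 * midLinkLen τ r := Finset.card_nsmul_le_sum _ _ _ hlong
    _ ≤ ∑ r ∈ u, 10 * midLinkLen τ r := Finset.sum_le_sum_of_subset htu
    _ = 10 * ∑ r ∈ u, midLinkLen τ r := (Finset.mul_sum _ _ _).symm

lemma left_group_bound {k m ψ : ℕ} {τ η : ℕ → ℕ} (hτ : MonotoneOn τ (Set.Iio (6 * m)))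
    (hψ : ((Finset.range m).filter fun r => 10 * midLinkLen τ r ≤ k).card ≤ ψ)
    (hη : ∀ r < m, τ (3 * m) - τ (3 * r + 1) ≤ η (3 * r)) :
    k * (m - ψ) ^ 2 ≤ 20 * ∑ i ∈ Finset.range (6 * m), η i := by
  have hcard := Finset.card_filter_add_card_filter_not (s := Finset.range m)
    (fun r => 10 * midLinkLen τ r ≤ k)
  set s := (Finset.range m).filter fun r => ¬ 10 * midLinkLen τ r ≤ k
  have hs : m - ψ ≤ s.card := by
    rw [Finset.card_range] at hcard
    omega
  have htail : ∀ r ∈ s, (k + 1) * (s.filter fun r' => r ≤ r').card ≤ 10 * η (3 * r) := by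
    intro r hr
    have hrm : r < m := Finset.mem_range.1 (Finset.mem_filter.1 hr).1
    have hlast : τ (3 * (m - 1) + 2) ≤ τ (3 * m) :=
      hτ.apply_le_apply_of_lt (by omega) (by omega)
    calc (k + 1) * (s.filter fun r' => r ≤ r').card
        ≤ 10 * ∑ r' ∈ Finset.Icc r (m - 1), midLinkLen τ r' := by
          refine succ_mul_card_le_sum_midLinkLen (fun r' hr' => ?_) (fun r' hr' => ?_) <;>
            simp only [s, Finset.mem_filter, Finset.mem_range, Finset.mem_Icc] at hr' ⊢ <;> omega
      _ ≤ 10 * (τ (3 * (m - 1) + 2) - τ (3 * r + 1)) :=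
          Nat.mul_le_mul_left 10 (sum_midLinkLen_Icc_le hτ (by omega) (by omega))
      _ ≤ 10 * η (3 * r) := by have := hη r hrm; omega
  calc k * (m - ψ) ^ 2 ≤ 2 * ∑ r ∈ s, 10 * η (3 * r) := mul_sq_le_of_tail_bound hs _ htail
    _ = 20 * ∑ r ∈ s, η (3 * r) := by rw [← Finset.mul_sum]; ring
    _ ≤ 20 * ∑ i ∈ Finset.range (6 * m), η i := by
        refine Nat.mul_le_mul_left 20 (sum_comp_le_sum_of_injOn (fun x _ y _ h => by omega)
          (fun r hr => ?_) η)
        simp only [s, Finset.mem_filter, Finset.mem_range] at hr ⊢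
        omega

lemma right_group_bound {k m ψ : ℕ} {τ η : ℕ → ℕ} (hτ : MonotoneOn τ (Set.Iio (6 * m)))
    (hψ : ((Finset.Ico m (2 * m)).filter fun r => 10 * midLinkLen τ r ≤ k).card ≤ ψ)
    (hη : ∀ r, m ≤ r → r < 2 * m → τ (3 * r + 2) - τ (3 * m) ≤ η (3 * r + 2)) :
    k * (m - ψ) ^ 2 ≤ 20 * ∑ i ∈ Finset.range (6 * m), η i := by
  have hcard := Finset.card_filter_add_card_filter_not (s := Finset.Ico m (2 * m))
    (fun r => 10 * midLinkLen τ r ≤ k)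
  set s := (Finset.Ico m (2 * m)).filter fun r => ¬ 10 * midLinkLen τ r ≤ k
  have hs : m - ψ ≤ s.card := by
    rw [Nat.card_Ico] at hcard
    omega
  have htail : ∀ r ∈ s, (k + 1) * (s.filter fun r' => r' ≤ r).card ≤ 10 * η (3 * r + 2) := by
    intro r hr
    have hrm : m ≤ r ∧ r < 2 * m := Finset.mem_Ico.1 (Finset.mem_filter.1 hr).1
    have hfirst : τ (3 * m) ≤ τ (3 * m + 1) :=
      hτ.apply_le_apply_of_lt (by omega) (by omega)
    calc (k + 1) * (s.filter fun r' => r' ≤ r).card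
        ≤ 10 * ∑ r' ∈ Finset.Icc m r, midLinkLen τ r' := by
          refine succ_mul_card_le_sum_midLinkLen (fun r' hr' => ?_) (fun r' hr' => ?_) <;>
            simp only [s, Finset.mem_filter, Finset.mem_Ico, Finset.mem_Icc] at hr' ⊢ <;> omega
      _ ≤ 10 * (τ (3 * r + 2) - τ (3 * m + 1)) :=
          Nat.mul_le_mul_left 10 (sum_midLinkLen_Icc_le hτ hrm.1 (by omega))
      _ ≤ 10 * η (3 * r + 2) := by have := hη r hrm.1 hrm.2; omega
  -- In `ℕᵒᵈ` the tails `{r' | r ≤ r'}` of `mul_sq_le_of_tail_bound` are the heads `{r' | r' ≤ r}`.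
  calc k * (m - ψ) ^ 2 ≤ 2 * ∑ r ∈ s, 10 * η (3 * r + 2) :=
        mul_sq_le_of_tail_bound (α := ℕᵒᵈ) hs _ htail
    _ = 20 * ∑ r ∈ s, η (3 * r + 2) := by rw [← Finset.mul_sum]; ring
    _ ≤ 20 * ∑ i ∈ Finset.range (6 * m), η i := by
        refine Nat.mul_le_mul_left 20 (sum_comp_le_sum_of_injOn (fun x _ y _ h => by omega)
          (fun r hr => ?_) η)
        simp only [s, Finset.mem_filter, Finset.mem_Ico, Finset.mem_range] at hr ⊢
        omega

lemma sq_mul_div_le_of_nat_bound {k m ψ N : ℕ} (hψ : ψ ≤ m) (h : k * (m - ψ) ^ 2 ≤ 20 * N) :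
    ((6 * m : ℝ) / 6 - ψ) ^ 2 * k / 20 ≤ N := by
  have hreal := (Nat.cast_le (α := ℝ)).2 h
  push_cast [hψ] at hreal
  rw [mul_div_cancel_left₀ _ (by norm_num : (6 : ℝ) ≠ 0)]
  linarith

section

variable {k T : ℕ} {σ : ℕ → S}

namespace CacheRun

variable (R : CacheRun S k T σ)

lemma req_mem_C {s : ℕ} (h1 : 1 ≤ s) (h2 : s ≤ T) : σ s ∈ R.C s := by
  by_cases h : σ s ∈ R.C (s - 1) ∨ (R.C (s - 1)).card < k
  · rw [R.hit s h1 h2 h]; exact Finset.mem_insert_self _ _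
  · rw [not_or, not_lt] at h
    rw [R.evict s h1 h2 h.1 (le_antisymm (R.card_le _) h.2)]; exact Finset.mem_insert_self _ _

lemma evictStep_of_mem_of_notMem {x : S} {u : ℕ} (h1 : 1 ≤ u) (h2 : u ≤ T)
    (hx : x ∈ R.C (u - 1)) (hx' : x ∉ R.C u) : EvictStep R u ∧ R.p u = x := by
  by_cases hhit : σ u ∈ R.C (u - 1) ∨ (R.C (u - 1)).card < k
  · rw [R.hit u h1 h2 hhit] at hx'
    exact absurd (Finset.mem_insert_of_mem hx) hx'
  rw [not_or, not_lt] at hhit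
  have hfull : (R.C (u - 1)).card = k := le_antisymm (R.card_le _) hhit.2
  refine ⟨⟨h1, h2, hhit.1, hfull⟩, by_contra fun hne => hx' ?_⟩
  rw [R.evict u h1 h2 hhit.1 hfull]
  exact Finset.mem_insert_of_mem (Finset.mem_erase.2 ⟨Ne.symm hne, hx⟩)

end CacheRun

lemma EvictStep.newPage_or_lastEvictedWith {R : CacheRun S k T σ} (strat : ℕ → Fin 3) {t : ℕ}
    (h : EvictStep R t) : NewPage σ t ∨ ∃ s₀, LastEvictedWith R strat t s₀ := by
  refine or_iff_not_imp_left.2 fun hnew => ?_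
  simp only [NewPage, not_forall, not_not] at hnew
  obtain ⟨s, hs1, hst, hss⟩ := hnew
  obtain ⟨ht1, htT, hmiss, -⟩ := h
  have hs : σ t ∈ R.C s := hss ▸ R.req_mem_C hs1 (by omega)
  -- `t₀` is the last time before `t` at which `σ t` was cached; it is evicted at `t₀ + 1`.
  set t₀ := Nat.findGreatest (fun u => σ t ∈ R.C u) (t - 1)
  have hin : σ t ∈ R.C t₀ := Nat.findGreatest_spec (P := fun u => σ t ∈ R.C u) (by omega) hs
  have hlt : t₀ < t - 1 := lt_of_le_of_ne (Nat.findGreatest_le _) fun h => hmiss (h ▸ hin)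
  have hout : ∀ u, t₀ < u → u ≤ t - 1 → σ t ∉ R.C u :=
    fun u h1 h2 => Nat.findGreatest_is_greatest h1 h2
  obtain ⟨hstep, hp⟩ := R.evictStep_of_mem_of_notMem (u := t₀ + 1) (by omega) (by omega)
    (by simpa using hin) (hout _ (by omega) (by omega))
  refine ⟨strat (t₀ + 1), t₀ + 1, by omega, hstep, hp, rfl, ?_⟩
  rintro t₁ h1 h2 ⟨⟨h1', hT', hmiss', hfull'⟩, hp'⟩
  exact hout (t₁ - 1) (by omega) (by omega) (hp' ▸ R.evict_mem t₁ h1' hT' hmiss' hfull')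

lemma lt_nextReq {t i : ℕ} (hT : t ≤ T) (h : ∀ s, i < s → s ≤ t → σ s ≠ σ i) :
    t < nextReq σ T i := by
  unfold nextReq
  split
  · next hex =>
    by_contra! hle
    obtain ⟨h1, -, h3⟩ := Nat.find_spec hex
    exact h _ h1 hle h3
  · omega

lemma EvictsIdx.lt_nextReq {R : CacheRun S k T σ} {t i : ℕ} (h : EvictsIdx R t i) :
    t < nextReq σ T i := by
  obtain ⟨⟨-, hT, hmiss, -⟩, hmem, -⟩ := h
  simp only [lastIdx, Finset.mem_filter, Finset.mem_Icc] at hmem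
  obtain ⟨-, hC, hlast⟩ := hmem
  refine Caching.lt_nextReq hT fun s hs hst heq => ?_
  rcases hst.lt_or_eq with hlt | rfl
  · exact hlast s ⟨by omega, by omega⟩ heq
  · exact hmiss (heq ▸ hC)

lemma monotoneOn_of_chain {R : CacheRun S k T σ} {d : ℕ} {b τ : ℕ → ℕ}
    (hEv : ∀ i < d, EvictsIdx R (τ i) (b i))
    (hchain : ∀ i, i + 1 < d → τ (i + 1) = nextReq σ T (b i)) : MonotoneOn τ (Set.Iio d) := by
  intro i _ j hj hij
  induction j, hij using Nat.le_induction with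
  | base => exact le_rfl
  | succ j _ ih =>
    have hj : j + 1 < d := hj
    exact (ih (Set.mem_Iio.2 (by omega))).trans
      (hchain j hj ▸ (hEv j (by omega)).lt_nextReq).le

namespace IsAlternatingOracle

variable {R : CacheRun S k T σ} {ω : ℕ → ℕ} {strat : ℕ → Fin 3}

lemma blindChoiceAt (hR : IsAlternatingOracle R ω strat) {t : ℕ} (h : EvictStep R t)
    (h0 : strat t = 0) : BlindChoiceAt R ω t := by
  obtain ⟨hnew, hB, hRand, hC⟩ := hR t h
  rcases h.newPage_or_lastEvictedWith strat with hn | ⟨s₀, hl⟩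
  · exact (hnew hn).2
  · fin_cases s₀
    · exact absurd ((hB hl).symm.trans h0) (by decide)
    · exact absurd ((hRand hl).1.symm.trans h0) (by decide)
    · exact (hC hl).2

lemma correctorChoiceAt (hR : IsAlternatingOracle R ω strat) {t : ℕ} (h : EvictStep R t)
    (h2 : strat t = 2) : CorrectorChoiceAt R ω t := by
  obtain ⟨hnew, hB, hRand, hC⟩ := hR t h
  rcases h.newPage_or_lastEvictedWith strat with hn | ⟨s₀, hl⟩
  · exact absurd ((hnew hn).1.symm.trans h2) (by decide)
  · fin_cases s₀
    · exact absurd ((hB hl).symm.trans h2) (by decide)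
    · exact (hRand hl).2
    · exact absurd ((hC hl).1.symm.trans h2) (by decide)

lemma sub_nextReq_le_dist_of_blind (hR : IsAlternatingOracle R ω strat) {t a b x : ℕ}
    (hev : EvictsIdx R t b) (h0 : strat t = 0) (ha : a ∈ lastIdx R (t - 1)) (hx : x ≤ ω a) :
    x - nextReq σ T b ≤ Nat.dist (nextReq σ T b) (ω b) := by
  have := hR.blindChoiceAt hev.1 h0 b hev.2.1 hev.2.2 a ha
  unfold Nat.dist
  omega

lemma sub_le_dist_of_corrector (hR : IsAlternatingOracle R ω strat) {t a b x : ℕ}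
    (hev : EvictsIdx R t b) (h2 : strat t = 2) (ha : a ∈ lastIdx R (t - 1)) (hx : ω a < x)
    (hxt : x ≤ t) : t - x ≤ Nat.dist (nextReq σ T b) (ω b) := by
  have hwrong : ω a < t := hx.trans_le hxt
  have := ((hR.correctorChoiceAt hev.1 h2).1 ⟨a, ha, hwrong⟩ b hev.2.1 hev.2.2).2 a ha hwrong
  have := hev.lt_nextReq
  unfold Nat.dist
  omega

end IsAlternatingOracle

end

theorem stmt11_general {S : Type} [DecidableEq S] (k T : ℕ) (σ : ℕ → S) (ω : ℕ → ℕ)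
    (R : CacheRun S k T σ) (strat : ℕ → Fin 3) (hR : IsAlternatingOracle R ω strat)
    (H : EvictionGraph R) (col : ℕ × ℕ → ℕ)
    (a c₀ d m : ℕ) (b τ : ℕ → ℕ)
    (hd : d = 6 * m)
    (hedges : ∀ i < d, (a, b i) ∈ H.E ∧ col (a, b i) = c₀ ∧ H.time (a, b i) = τ i)
    (hEv : ∀ i < d, EvictsIdx R (τ i) (b i))
    (hchain : ∀ i, i + 1 < d → τ (i + 1) = nextReq σ T (b i))
    (htriple : ∀ r < 2 * m, strat (τ (3 * r)) = 0 ∧ strat (τ (3 * r + 1)) = 1 ∧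
        strat (τ (3 * r + 2)) = 2)
    (ψ : ℕ)
    (hψ : ψ = max
        (((Finset.range m).filter fun r =>
            10 * (τ (3 * r + 2) - τ (3 * r + 1)) ≤ k).card)
        (((Finset.Ico m (2 * m)).filter fun r =>
            10 * (τ (3 * r + 2) - τ (3 * r + 1)) ≤ k).card)) :
    ((d : ℝ) / 6 - ψ) ^ 2 * k / 20 ≤
      ∑ i ∈ Finset.range d, (Nat.dist (nextReq σ T (b i)) (ω (b i)) : ℝ) := by
  subst hd
  have hτ : MonotoneOn τ (Set.Iio (6 * m)) := monotoneOn_of_chain hEv hchain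
  have hcached : ∀ i < 6 * m, a ∈ lastIdx R (τ i - 1) := fun i hi => by
    simpa only [(hedges i hi).2.2] using (H.mistake _ (hedges i hi).1).2.1
  have hψm : ψ ≤ m := hψ ▸ max_le ((Finset.card_filter_le _ _).trans (Finset.card_range m).le)
    ((Finset.card_filter_le _ _).trans (by rw [Nat.card_Ico]; omega))
  push_cast [← Nat.cast_sum]
  refine sq_mul_div_le_of_nat_bound hψm ?_
  rcases le_or_gt (τ (3 * m)) (ω a) with hlarge | hsmall
  · refine left_group_bound hτ (hψ ▸ le_max_left _ _) fun r hr => ?_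
    rw [hchain (3 * r) (by omega)]
    exact hR.sub_nextReq_le_dist_of_blind (hEv _ (by omega)) (htriple r (by omega)).1
      (hcached _ (by omega)) hlarge
  · refine right_group_bound hτ (hψ ▸ le_max_right _ _) fun r hrm hr => ?_
    exact hR.sub_le_dist_of_corrector (hEv _ (by omega)) (htriple r hr).2.2
      (hcached _ (by omega)) hsmall (hτ.apply_le_apply_of_lt (by omega) (by omega))

/-- For a run of AlternatingOracle (fixed realization) and a colored
eviction graph whose same-colored edges share a source and whose targets form chains, if
the edges `(a, b 0), …, (a, b (d-1))` all have the same color, `(b 0, …, b (d-1))` is a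
divisible chain consisting of `2m` triples (so `d = 6m`), and `ψ` is the maximum of the
numbers of short triples in the left and in the right group, then
`Σ_i η(b i) ≥ (d/6 − ψ)²·k/20`. -/
theorem stmt11 {S : Type} [DecidableEq S] (k T : ℕ) (hk : 1 ≤ k) (σ : ℕ → S) (ω : ℕ → ℕ)
    (R : CacheRun S k T σ) (strat : ℕ → Fin 3) (hR : IsAlternatingOracle R ω strat)
    (H : EvictionGraph R) (col : ℕ × ℕ → ℕ)
    (hsrc : ∀ e ∈ H.E, ∀ e' ∈ H.E, col e = col e' → e.1 = e'.1)
    (hglobal : ∀ c : ℕ, ∃ (d' : ℕ) (a' : ℕ) (b' : ℕ → ℕ),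
        (H.E.filter fun e => col e = c) = (Finset.range d').image (fun x => (a', b' x)) ∧
        (∀ x < d', ∀ x' < d', b' x = b' x' → x = x') ∧
        (∀ x, x + 1 < d' → TriggersIdx R (b' x) (b' (x + 1))))
    (a c₀ d m : ℕ) (b τ : ℕ → ℕ)
    (hd : d = 6 * m)
    (hedges : ∀ i < d, (a, b i) ∈ H.E ∧ col (a, b i) = c₀ ∧ H.time (a, b i) = τ i)
    (honly : ∀ e ∈ H.E, col e = c₀ → ∃ i < d, e = (a, b i))
    (hEv : ∀ i < d, EvictsIdx R (τ i) (b i))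
    (hchain : ∀ i, i + 1 < d → τ (i + 1) = nextReq σ T (b i))
    (htriple : ∀ r < 2 * m, strat (τ (3 * r)) = 0 ∧ strat (τ (3 * r + 1)) = 1 ∧
        strat (τ (3 * r + 2)) = 2)
    (ψ : ℕ)
    (hψ : ψ = max
        (((Finset.range m).filter fun r =>
            10 * (τ (3 * r + 2) - τ (3 * r + 1)) ≤ k).card)
        (((Finset.Ico m (2 * m)).filter fun r =>
            10 * (τ (3 * r + 2) - τ (3 * r + 1)) ≤ k).card)) :
    ((d : ℝ) / 6 - ψ) ^ 2 * k / 20 ≤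
      ∑ i ∈ Finset.range d, (Nat.dist (nextReq σ T (b i)) (ω (b i)) : ℝ) :=
  stmt11_general k T σ ω R strat hR H col a c₀ d m b τ hd hedges hEv hchain htriple ψ hψ

end Caching
end

section
/- Fix γ ∈ (0,1). For every ε > 0 there exists a constant C such that the following holds: for every T ∈ ℕ and every function N : {0,1}^T → {1,…,T}, if ξ = (ξ₁,…,ξ_T) are i.i.d. Bernoulli(γ) random variables and E[N(ξ)] ≥ C, then |E[S(ξ, N(ξ))] − γ·E[N(ξ)]| ≤ ε·E[N(ξ)]. In other words, as T → ∞ and E[N(ξ)] → ∞, the ratio E[S(ξ, N(ξ))] / E[N(ξ)] converges to γ. -/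
namespace Caching

attribute [local instance low] Classical.propDecidable

variable {S : Type} [DecidableEq S]

/-!
Write `D_m(x) = S(x, m) - γ m`, a sum of `m` independent centred coins. Expanding `D_m^6`,
every index tuple with an index hit exactly once has expectation zero, and the surviving tuples
take at most three values, so `E[D_m^6] ≤ 3^6 m^3`. The random time `N` is handled pointwise:
`|D_N| ≤ ε N / 2 + ∑_{m ≤ T} D_m^6 / (ε m / 2)^5`, since if `|D_N| > ε N / 2` the term `m = N`
alone dominates `|D_N|`. Taking expectations, the sum contributes at most
`(2 / ε)^5 3^6 ∑ 1 / m^2 ≤ 46656 / ε^5`, which is at most `ε E[N] / 2` once `E[N] ≥ 93312 / ε^6`.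
-/

open Finset

section Counting

variable {ι : Type*} [DecidableEq ι]

lemma card_image_le_of_forall_card_fiber_ne_one {k : ℕ} (g : Fin (2 * k) → ι)
    (hg : ∀ i, #{j | g j = i} ≠ 1) : #(univ.image g) ≤ k := by
  have hfiber : ∀ i ∈ univ.image g, 2 ≤ #{j | g j = i} := by
    intro i hi
    obtain ⟨j, -, rfl⟩ := mem_image.1 hi
    have : 0 < #{j' | g j' = g j} := card_pos.2 ⟨j, by simp⟩
    have := hg (g j)
    omega
  have := card_nsmul_le_sum _ _ _ hfiber
  rw [← card_eq_sum_card_image, card_univ, Fintype.card_fin, smul_eq_mul] at this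
  omega

lemma card_filter_forall_card_fiber_ne_one_le (s : Finset ι) (k : ℕ) :
    #{g ∈ Fintype.piFinset fun _ : Fin (2 * k) => s | ∀ i, #{j | g j = i} ≠ 1} ≤
      k ^ (2 * k) * #s ^ k := by
  rcases lt_or_ge #s k with hs | hs
  · calc _ ≤ #(Fintype.piFinset fun _ : Fin (2 * k) => s) := card_filter_le _ _
      _ = #s ^ k * #s ^ k := by simp [Fintype.card_piFinset, two_mul, pow_add]
      _ ≤ k ^ (2 * k) * #s ^ k := Nat.mul_le_mul_right _ <|
        calc #s ^ k ≤ k ^ k := Nat.pow_le_pow_left hs.le k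
          _ ≤ k ^ (2 * k) := Nat.pow_le_pow_right (by omega) (by omega)
  · have hcover : {g ∈ Fintype.piFinset fun _ : Fin (2 * k) => s | ∀ i, #{j | g j = i} ≠ 1} ⊆
        (s.powersetCard k).biUnion fun A => Fintype.piFinset fun _ : Fin (2 * k) => A := by
      intro g hg
      rw [mem_filter, Fintype.mem_piFinset] at hg
      have himage : univ.image g ⊆ s := by
        simpa [image_subset_iff] using hg.1
      obtain ⟨A, hgA, hAs, hAk⟩ := exists_subsuperset_card_eq himage
        (card_image_le_of_forall_card_fiber_ne_one g hg.2) hs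
      exact mem_biUnion.2 ⟨A, mem_powersetCard.2 ⟨hAs, hAk⟩,
        Fintype.mem_piFinset.2 fun j => hgA (mem_image_of_mem g (mem_univ j))⟩
    calc _ ≤ _ := card_le_card hcover
      _ ≤ _ := card_biUnion_le
      _ = (#s).choose k * k ^ (2 * k) := by
        rw [← card_powersetCard]
        refine sum_const_nat fun A hA => ?_
        simp [Fintype.card_piFinset, (mem_powersetCard.1 hA).2]
      _ ≤ #s ^ k * k ^ (2 * k) := Nat.mul_le_mul_right _ (Nat.choose_le_pow _ _)
      _ = k ^ (2 * k) * #s ^ k := mul_comm _ _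

end Counting

noncomputable def centeredBit (γ : ℝ) (b : Bool) : ℝ := (if b then 1 else 0) - γ

noncomputable def centeredMoment (γ : ℝ) (c : ℕ) : ℝ :=
  ∑ b, (if b then γ else 1 - γ) * centeredBit γ b ^ c

section Moments

variable {γ : ℝ}

lemma bernWeight_nonneg (h0 : 0 ≤ γ) (h1 : γ ≤ 1) {T : ℕ} (x : Fin T → Bool) :
    0 ≤ bernWeight γ x :=
  prod_nonneg fun i _ => by split <;> linarith

variable (γ) in
lemma sum_bernWeight_mul_prod {T : ℕ} (f : Fin T → Bool → ℝ) :
    ∑ x, bernWeight γ x * ∏ i, f i (x i) =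
      ∏ i, ∑ b, (if b then γ else 1 - γ) * f i b := by
  simp only [Fintype.prod_sum, bernWeight, ← prod_mul_distrib]

variable (γ) in
lemma centeredMoment_one : centeredMoment γ 1 = 0 := by
  simp [centeredMoment, centeredBit]; ring

lemma abs_centeredMoment_le_one (h0 : 0 ≤ γ) (h1 : γ ≤ 1) (c : ℕ) :
    |centeredMoment γ c| ≤ 1 := by
  have hY : ∀ b, |centeredBit γ b ^ c| ≤ 1 := fun b => by
    rw [abs_pow]
    refine pow_le_one₀ (abs_nonneg _) ?_
    cases b <;> simp only [centeredBit, abs_le] <;> norm_num <;> constructor <;> linarith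
  calc _ ≤ ∑ b, |(if b then γ else 1 - γ) * centeredBit γ b ^ c| := abs_sum_le_sum_abs _ _
    _ ≤ ∑ b : Bool, (if b then γ else 1 - γ) := by
      refine sum_le_sum fun b _ => ?_
      rw [abs_mul]
      have hw : |(if b then γ else 1 - γ)| = if b then γ else 1 - γ := by
        cases b <;> simp [abs_of_nonneg, h0, h1]
      rw [hw]
      exact mul_le_of_le_one_right (by cases b <;> simp <;> linarith) (hY b)
    _ = 1 := by simp

lemma sum_bernWeight_mul_sum_centeredBit_pow_le (h0 : 0 ≤ γ) (h1 : γ ≤ 1) {T : ℕ}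
    (s : Finset (Fin T)) (k : ℕ) :
    ∑ x, bernWeight γ x * (∑ i ∈ s, centeredBit γ (x i)) ^ (2 * k) ≤ k ^ (2 * k) * #s ^ k := by
  have hfiber : ∀ (g : Fin (2 * k) → Fin T) (x : Fin T → Bool),
      ∏ j, centeredBit γ (x (g j)) = ∏ i, centeredBit γ (x i) ^ #{j | g j = i} := fun g x => by
    simp [← prod_fiberwise' univ g (fun i => centeredBit γ (x i))]
  have hexpand : ∑ x, bernWeight γ x * (∑ i ∈ s, centeredBit γ (x i)) ^ (2 * k) =
      ∑ g ∈ Fintype.piFinset fun _ : Fin (2 * k) => s,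
        ∏ i, centeredMoment γ #{j | g j = i} := by
    simp_rw [sum_pow', mul_sum]
    rw [sum_comm]
    refine sum_congr rfl fun g _ => ?_
    -- by independence, the expectation of a monomial factors into moments of single coins
    simp_rw [hfiber g]
    exact sum_bernWeight_mul_prod γ fun i b => centeredBit γ b ^ #{j | g j = i}
  have hterm : ∀ g : Fin (2 * k) → Fin T, ∏ i, centeredMoment γ #{j | g j = i} ≤
      if ∀ i, #{j | g j = i} ≠ 1 then 1 else 0 := by
    intro g
    split_ifs with hg
    · exact (le_abs_self _).trans <| (abs_prod _ _).trans_le <|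
        prod_le_one (fun _ _ => abs_nonneg _) fun i _ => abs_centeredMoment_le_one h0 h1 _
    · -- an index hit exactly once contributes the vanishing first moment
      obtain ⟨i, hi⟩ := not_forall_not.1 hg
      rw [prod_eq_zero (mem_univ i) (by rw [hi, centeredMoment_one])]
  calc _ = _ := hexpand
    _ ≤ ∑ g ∈ Fintype.piFinset fun _ : Fin (2 * k) => s,
        if ∀ i, #{j | g j = i} ≠ 1 then (1 : ℝ) else 0 := sum_le_sum fun g _ => hterm g
    _ = (#{g ∈ Fintype.piFinset fun _ : Fin (2 * k) => s | ∀ i, #{j | g j = i} ≠ 1} : ℝ) :=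
      sum_boole _ _
    _ ≤ k ^ (2 * k) * #s ^ k := by exact_mod_cast card_filter_forall_card_fiber_ne_one_le s k

lemma abs_sum_bernWeight_mul_le (h0 : 0 ≤ γ) (h1 : γ ≤ 1) {T : ℕ} {f g : (Fin T → Bool) → ℝ}
    (hfg : ∀ x, |f x| ≤ g x) : |∑ x, bernWeight γ x * f x| ≤ ∑ x, bernWeight γ x * g x :=
  (abs_sum_le_sum_abs _ _).trans <| sum_le_sum fun x _ => by
    rw [abs_mul, abs_of_nonneg (bernWeight_nonneg h0 h1 x)]
    exact mul_le_mul_of_nonneg_left (hfg x) (bernWeight_nonneg h0 h1 x)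

variable (γ) in
lemma scount_sub_eq_sum_centeredBit {T : ℕ} (x : Fin T → Bool) {m : ℕ} (hm : m ≤ T) :
    (scount x m : ℝ) - γ * m = ∑ i ∈ {i : Fin T | (i : ℕ) < m}, centeredBit γ (x i) := by
  simp only [centeredBit, sum_sub_distrib, sum_const, Fin.card_filter_val_lt, min_eq_right hm,
    sum_boole, filter_filter, scount, nsmul_eq_mul]
  ring

lemma sum_bernWeight_mul_scount_sub_pow_le (h0 : 0 ≤ γ) (h1 : γ ≤ 1) {T m : ℕ} (hm : m ≤ T)
    (k : ℕ) :
    ∑ x : Fin T → Bool, bernWeight γ x * ((scount x m : ℝ) - γ * m) ^ (2 * k) ≤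
      k ^ (2 * k) * m ^ k := by
  simp_rw [scount_sub_eq_sum_centeredBit γ _ hm]
  simpa [Fin.card_filter_val_lt, min_eq_right hm] using
    sum_bernWeight_mul_sum_centeredBit_pow_le h0 h1 {i : Fin T | (i : ℕ) < m} k

end Moments

lemma abs_le_add_sum_pow_div_pow {α : Type*} {s : Finset α} {f a : α → ℝ}
    (ha : ∀ i ∈ s, 0 < a i) (n : ℕ) {m : α} (hm : m ∈ s) :
    |f m| ≤ a m + ∑ i ∈ s, |f i| ^ (n + 1) / a i ^ n := by
  have hterm : ∀ i ∈ s, 0 ≤ |f i| ^ (n + 1) / a i ^ n := fun i hi =>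
    div_nonneg (by positivity) (pow_nonneg (ha i hi).le n)
  have hsingle := single_le_sum hterm hm
  rcases le_or_gt |f m| (a m) with hsmall | hlarge
  · linarith [sum_nonneg hterm]
  · have : |f m| ≤ |f m| ^ (n + 1) / a m ^ n := by
      rw [le_div_iff₀ (pow_pos (ha m hm) n), pow_succ']
      exact mul_le_mul_of_nonneg_left (pow_le_pow_left₀ (ha m hm).le hlarge.le n) (abs_nonneg _)
    linarith [(ha m hm).le]

lemma sum_bernWeight_mul_sum_scount_sub_pow_div_le {γ ε : ℝ} (h0 : 0 ≤ γ) (h1 : γ ≤ 1)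
    (hε : 0 < ε) (T : ℕ) :
    ∑ x : Fin T → Bool, bernWeight γ x *
        ∑ m ∈ Icc 1 T, |(scount x m : ℝ) - γ * m| ^ 6 / (ε / 2 * m) ^ 5 ≤ 46656 / ε ^ 5 := by
  have hmoment : ∀ m ∈ Icc 1 T,
      (∑ x : Fin T → Bool, bernWeight γ x * ((scount x m : ℝ) - γ * m) ^ 6) / (ε / 2 * m) ^ 5 ≤
        23328 / ε ^ 5 * ((m : ℝ) ^ 2)⁻¹ := by
    intro m hm
    have hm0 : (0 : ℝ) < m := by exact_mod_cast (mem_Icc.1 hm).1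
    calc _ ≤ (3 ^ (2 * 3) * (m : ℝ) ^ 3) / (ε / 2 * m) ^ 5 := by
          gcongr
          exact sum_bernWeight_mul_scount_sub_pow_le h0 h1 (mem_Icc.1 hm).2 3
      _ = 23328 / ε ^ 5 * ((m : ℝ) ^ 2)⁻¹ := by field_simp; ring
  have hIcc : Icc 1 T = Ioo 0 (T + 1) := by ext; simp [Nat.one_le_iff_ne_zero, Nat.pos_iff_ne_zero]
  calc _ = ∑ m ∈ Icc 1 T, (∑ x : Fin T → Bool,
          bernWeight γ x * ((scount x m : ℝ) - γ * m) ^ 6) / (ε / 2 * m) ^ 5 := by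
        simp_rw [mul_sum, sum_div, (by decide : Even 6).pow_abs, mul_div_assoc]
        exact sum_comm
    _ ≤ ∑ m ∈ Icc 1 T, 23328 / ε ^ 5 * ((m : ℝ) ^ 2)⁻¹ := sum_le_sum hmoment
    _ ≤ 23328 / ε ^ 5 * 2 := by
        rw [← mul_sum, hIcc]
        gcongr
        simpa using sum_Ioo_inv_sq_le (α := ℝ) 0 (T + 1)
    _ = 46656 / ε ^ 5 := by ring

/-- For i.i.d. Bernoulli(γ) bits `ξ` and any function `N` of the
realization with `1 ≤ N(ξ) ≤ T`, the ratio `E[S(ξ, N(ξ))] / E[N(ξ)]` converges to `γ`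
as `E[N(ξ)] → ∞`: for every `ε > 0` there is `C` such that `E[N(ξ)] ≥ C` implies
`|E[S(ξ, N(ξ))] − γ·E[N(ξ)]| ≤ ε·E[N(ξ)]`. -/
theorem stmt12 (γ : ℝ) (hγ0 : 0 < γ) (hγ1 : γ < 1) :
    ∀ ε > (0 : ℝ), ∃ C : ℝ,
      ∀ (T : ℕ) (N : (Fin T → Bool) → ℕ), (∀ x, 1 ≤ N x ∧ N x ≤ T) →
        C ≤ ∑ x : Fin T → Bool, bernWeight γ x * N x →
        |(∑ x : Fin T → Bool, bernWeight γ x * scount x (N x)) -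
            γ * ∑ x : Fin T → Bool, bernWeight γ x * N x| ≤
          ε * ∑ x : Fin T → Bool, bernWeight γ x * N x := by
  intro ε hε
  refine ⟨93312 / ε ^ 6, fun T N hN hC => ?_⟩
  set E := ∑ x : Fin T → Bool, bernWeight γ x * N x
  set G : (Fin T → Bool) → ℝ := fun x =>
    ∑ m ∈ Icc 1 T, |(scount x m : ℝ) - γ * m| ^ 6 / (ε / 2 * m) ^ 5
  have hpointwise : ∀ x, |(scount x (N x) : ℝ) - γ * N x| ≤ ε / 2 * N x + G x := fun x => by
    have hpos : ∀ m ∈ Icc 1 T, 0 < ε / 2 * m := fun m hm => by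
      have : (0 : ℝ) < m := by exact_mod_cast (mem_Icc.1 hm).1
      positivity
    exact abs_le_add_sum_pow_div_pow (f := fun m => (scount x m : ℝ) - γ * m) hpos 5
      (mem_Icc.2 (hN x))
  have hG : ∑ x, bernWeight γ x * G x ≤ ε / 2 * E := calc
    _ ≤ 46656 / ε ^ 5 := sum_bernWeight_mul_sum_scount_sub_pow_div_le hγ0.le hγ1.le hε T
    _ = ε / 2 * (93312 / ε ^ 6) := by field_simp; ring
    _ ≤ ε / 2 * E := by gcongr
  calc _ = |∑ x, bernWeight γ x * ((scount x (N x) : ℝ) - γ * N x)| := by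
        rw [mul_sum, ← sum_sub_distrib]
        exact congrArg _ (sum_congr rfl fun x _ => by ring)
    _ ≤ ∑ x, bernWeight γ x * (ε / 2 * N x + G x) :=
        abs_sum_bernWeight_mul_le hγ0.le hγ1.le hpointwise
    _ = ε / 2 * E + ∑ x, bernWeight γ x * G x := by
        rw [mul_sum, ← sum_add_distrib]
        exact sum_congr rfl fun x _ => by ring
    _ ≤ ε * E := by linarith

end Caching
end
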